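/- arXiv:1801.03216 — 7 statements merged into one kernel-verified Lean document; each statement's English description precedes it below -/
import Mathlib

section
/- Let ε ∈ (0,1) and let (u₁,u₂,u₃) be an ε-cycle for the sets (C₁,C₂,C₃) in ℝ³ with support (w₁,w₂,w₃). Then the six points u₁, u₂, u₃, w₁, w₂, w₃ all have the same third coordinate; i.e. they lie in a common plane orthogonal to the z-axis. -/
noncomputable section
open Real Filter

/-- ℝ³ with the Euclidean structure. -/
abbrev E3 : Type := EuclideanSpace ℝ (Fin 3)
/-- ℝ² with the Euclidean structure. -/
abbrev E2 : Type := EuclideanSpace ℝ (Fin 2)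

/-- The real inner product. -/
def ip {E : Type} [NormedAddCommGroup E] [InnerProductSpace ℝ E] (x y : E) : ℝ :=
  inner ℝ x y

/-- `w` is the metric projection of `u` onto `C`, characterised by membership
together with the variational inequality `⟪v - w, u - w⟫ ≤ 0` for all `v ∈ C`. -/
def IsProj {E : Type} [NormedAddCommGroup E] [InnerProductSpace ℝ E]
    (C : Set E) (u w : E) : Prop :=
  w ∈ C ∧ ∀ v ∈ C, inner ℝ (v - w) (u - w) ≤ (0 : ℝ)

/-- `(u₁,u₂,u₃)` is an ε-cycle for `(C₁,C₂,C₃)` with support `(w₁,w₂,w₃)`. -/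
def IsCycleWithSupport {E : Type} [NormedAddCommGroup E] [InnerProductSpace ℝ E]
    (C₁ C₂ C₃ : Set E) (ε : ℝ) (u₁ u₂ u₃ w₁ w₂ w₃ : E) : Prop :=
  IsProj C₁ u₃ w₁ ∧ IsProj C₂ u₁ w₂ ∧ IsProj C₃ u₂ w₃ ∧
    u₁ = u₃ + ε • (w₁ - u₃) ∧ u₂ = u₁ + ε • (w₂ - u₁) ∧ u₃ = u₂ + ε • (w₃ - u₂)

/-- `(u₁,u₂,u₃)` is an ε-cycle for `(C₁,C₂,C₃)`. -/
def IsCycle {E : Type} [NormedAddCommGroup E] [InnerProductSpace ℝ E]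
    (C₁ C₂ C₃ : Set E) (ε : ℝ) (u₁ u₂ u₃ : E) : Prop :=
  ∃ w₁ w₂ w₃ : E, IsCycleWithSupport C₁ C₂ C₃ ε u₁ u₂ u₃ w₁ w₂ w₃

/-- An admissible sequence: strictly increasing (on indices `k ≥ 1`), starting
at `t₁ = π/4` and converging to `π/2`. -/
def Admissible (t : ℕ → ℝ) : Prop :=
  StrictMonoOn t (Set.Ici 1) ∧ t 1 = π / 4 ∧ Tendsto t atTop (nhds (π / 2))

/-- The segment C₁ = co{(−2,2,1), (−2,2,−1)}. -/
def C1 : Set E3 := convexHull ℝ {WithLp.toLp 2 ![(-2 : ℝ), 2, 1], WithLp.toLp 2 ![(-2 : ℝ), 2, -1]}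

/-- The segment C₂ = co{(2,2,1), (2,2,−1)}. -/
def C2 : Set E3 := convexHull ℝ {WithLp.toLp 2 ![(2 : ℝ), 2, 1], WithLp.toLp 2 ![(2 : ℝ), 2, -1]}

/-- The points pₖ = (cos tₖ, sin tₖ, (−1)ᵏ). -/
def pSeq (t : ℕ → ℝ) (k : ℕ) : E3 := WithLp.toLp 2 ![Real.cos (t k), Real.sin (t k), (-1 : ℝ) ^ k]

/-- C₃ = closed convex hull of {pₖ : k ≥ 1}. -/
def C3 (t : ℕ → ℝ) : Set E3 := closure (convexHull ℝ (pSeq t '' {k | 1 ≤ k}))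

/-- a = (−2,2). -/
def aPt : E2 := WithLp.toLp 2 ![(-2 : ℝ), 2]
/-- b = (2,2). -/
def bPt : E2 := WithLp.toLp 2 ![(2 : ℝ), 2]
/-- vₖ = (cos tₖ, sin tₖ). -/
def vSeq (t : ℕ → ℝ) (k : ℕ) : E2 := WithLp.toLp 2 ![Real.cos (t k), Real.sin (t k)]
/-- C₁' = {a}. -/
def C1' : Set E2 := {aPt}
/-- C₂' = {b}. -/
def C2' : Set E2 := {bPt}
/-- C₃' = closed convex hull of {vₖ : k ≥ 1}. -/
def C3' (t : ℕ → ℝ) : Set E2 := closure (convexHull ℝ (vSeq t '' {k | 1 ≤ k}))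

/-- Projection of ℝ³ onto the xy-plane. -/
def projXY (x : E3) : E2 := WithLp.toLp 2 ![x 0, x 1]

/-- Lifting a point of the xy-plane to height `z`. -/
def liftZ (p : E2) (z : ℝ) : E3 := WithLp.toLp 2 ![p 0, p 1, z]

/-- The solid cylinder D. -/
def Dcyl : Set E3 := {x | x 0 ^ 2 + x 1 ^ 2 ≤ 1 ∧ |x 2| ≤ 1}

/-! All three supports have height in `[-1, 1]`, and each `uᵢ` lies between its predecessor
and a support point, so the heights of the `uᵢ` stay in `[-1, 1]`. `C₁` and `C₂` are vertical
segments spanning exactly these heights, so projecting onto them leaves the height unchanged;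
this pins `w₁`, `u₁`, `w₂`, `u₂` to the height of `u₃`, and then the last step of the cycle
forces `w₃` to that height as well, since `ε ≠ 0`. -/

open Set

theorem IsProj.inner_eq_zero_of_add_smul_mem {E : Type} [NormedAddCommGroup E]
    [InnerProductSpace ℝ E] {C : Set E} {u w : E} (h : IsProj C u w) (e : E)
    (he : w + inner ℝ (u - w) e • e ∈ C) : inner ℝ (u - w) e = 0 := by
  have hle := h.2 _ he
  rw [add_sub_cancel_left, real_inner_smul_left, real_inner_comm (u - w) e] at hle
  exact mul_self_eq_zero.mp (le_antisymm hle (mul_self_nonneg _))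

/-- Unrolling the cycle once gives `(1 - (1 - ε)³) u₃ = (1 - ε)² ε w₁ + (1 - ε) ε w₂ + ε w₃`,
so `u₃` is a convex combination of the support. -/
theorem Convex.mem_of_cycle {E : Type} [AddCommGroup E] [Module ℝ E] {K : Set E}
    (hK : Convex ℝ K) {ε : ℝ} (hε₀ : 0 < ε) (hε₁ : ε ≤ 1) {u₁ u₂ u₃ w₁ w₂ w₃ : E}
    (hw₁ : w₁ ∈ K) (hw₂ : w₂ ∈ K) (hw₃ : w₃ ∈ K) (h₁ : u₁ = u₃ + ε • (w₁ - u₃))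
    (h₂ : u₂ = u₁ + ε • (w₂ - u₁)) (h₃ : u₃ = u₂ + ε • (w₃ - u₂)) : u₃ ∈ K := by
  set d : ℝ := 1 - (1 - ε) ^ 3
  have hd : 0 < d := by
    have : (1 - ε) ^ 3 < 1 := pow_lt_one₀ (by linarith) (by linarith) (by norm_num)
    linarith
  have hcomb : d • u₃ = ((1 - ε) ^ 2 * ε) • w₁ + ((1 - ε) * ε) • w₂ + ε • w₃ := by
    subst h₁ h₂
    linear_combination (norm := module) h₃
  have hu₃ : u₃ = ∑ i, ![(1 - ε) ^ 2 * ε / d, (1 - ε) * ε / d, ε / d] i • ![w₁, w₂, w₃] i := by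
    apply smul_right_injective E hd.ne'
    simp only [Fin.sum_univ_three, smul_add, smul_smul, hcomb]
    simp [mul_div_cancel₀ _ hd.ne']
  rw [hu₃]
  refine hK.sum_mem (fun i _ => ?_) ?_ (fun i _ => ?_)
  · have : 0 ≤ 1 - ε := by linarith
    fin_cases i <;> dsimp <;> positivity
  · simp only [Fin.sum_univ_three, Matrix.cons_val_zero, Matrix.cons_val_one, Matrix.cons_val]
    rw [← add_div, ← add_div, div_eq_one_iff_eq hd.ne']
    ring
  · fin_cases i <;> assumption

-- `C1` and `C2` are definitionally `verticalSegment (-2) 2` and `verticalSegment 2 2`.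
def verticalSegment (a b : ℝ) : Set E3 :=
  convexHull ℝ {WithLp.toLp 2 ![a, b, 1], WithLp.toLp 2 ![a, b, -1]}

theorem mem_verticalSegment_iff {a b : ℝ} {x : E3} :
    x ∈ verticalSegment a b ↔ x 0 = a ∧ x 1 = b ∧ x 2 ∈ Icc (-1) 1 := by
  rw [verticalSegment, convexHull_pair]
  constructor
  · rintro ⟨p, q, hp, hq, hpq, rfl⟩
    simp only [PiLp.add_apply, PiLp.smul_apply, smul_eq_mul, Matrix.cons_val_zero,
      Matrix.cons_val_one, Matrix.cons_val, mem_Icc]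
    exact ⟨by linear_combination a * hpq, by linear_combination b * hpq, by linarith, by linarith⟩
  · rintro ⟨h0, h1, hl, hu⟩
    refine ⟨(1 + x 2) / 2, (1 - x 2) / 2, by linarith, by linarith, by ring, ?_⟩
    ext i
    fin_cases i <;>
      simp only [Fin.zero_eta, Fin.mk_one, Fin.reduceFinMk, PiLp.add_apply, PiLp.smul_apply,
        Matrix.cons_val_zero, Matrix.cons_val_one, Matrix.cons_val, smul_eq_mul, h0, h1] <;> ring

theorem IsProj.verticalSegment_apply_two {a b : ℝ} {u w : E3}
    (h : IsProj (verticalSegment a b) u w) (hu : u 2 ∈ Icc (-1) 1) : w 2 = u 2 := by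
  have hw := mem_verticalSegment_iff.mp h.1
  have hinner : inner ℝ (u - w) (EuclideanSpace.single 2 1) = u 2 - w 2 := by
    simp [EuclideanSpace.inner_single_right]
  have key := h.inner_eq_zero_of_add_smul_mem (EuclideanSpace.single 2 1) ?_
  · linarith
  · rw [hinner, mem_verticalSegment_iff]
    simp [hw.1, hw.2.1, hu]

theorem C3_subset_slab (t : ℕ → ℝ) : C3 t ⊆ {x | x 2 ∈ Icc (-1) 1} := by
  have hslab : {x : E3 | x 2 ∈ Icc (-1) 1} = EuclideanSpace.proj (2 : Fin 3) ⁻¹' Icc (-1) 1 := rfl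
  rw [hslab]
  refine closure_minimal (convexHull_min ?_ ((convex_Icc _ _).linear_preimage _))
    (isClosed_Icc.preimage (EuclideanSpace.proj _).continuous)
  rintro _ ⟨k, -, rfl⟩
  simp [pSeq, ← abs_le]

theorem stmt2_general (t : ℕ → ℝ) (ε : ℝ) (hε : ε ∈ Set.Ioo (0 : ℝ) 1)
    (u₁ u₂ u₃ w₁ w₂ w₃ : E3)
    (hc : IsCycleWithSupport C1 C2 (C3 t) ε u₁ u₂ u₃ w₁ w₂ w₃) :
    u₁ 2 = u₂ 2 ∧ u₂ 2 = u₃ 2 ∧ u₃ 2 = w₁ 2 ∧ w₁ 2 = w₂ 2 ∧ w₂ 2 = w₃ 2 := by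
  obtain ⟨hw₁, hw₂, hw₃, h₁, h₂, h₃⟩ := hc
  have z₁ : u₁ 2 = u₃ 2 + ε • (w₁ 2 - u₃ 2) := by simpa using congrArg (· 2) h₁
  have z₂ : u₂ 2 = u₁ 2 + ε • (w₂ 2 - u₁ 2) := by simpa using congrArg (· 2) h₂
  have z₃ : u₃ 2 = u₂ 2 + ε • (w₃ 2 - u₂ 2) := by simpa using congrArg (· 2) h₃
  have hu₃ : u₃ 2 ∈ Icc (-1) 1 := (convex_Icc _ _).mem_of_cycle hε.1 hε.2.le
    (mem_verticalSegment_iff.mp hw₁.1).2.2 (mem_verticalSegment_iff.mp hw₂.1).2.2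
    (C3_subset_slab t hw₃.1) z₁ z₂ z₃
  have hw₁₃ : w₁ 2 = u₃ 2 := IsProj.verticalSegment_apply_two hw₁ hu₃
  have hu₁₃ : u₁ 2 = u₃ 2 := by rw [z₁, hw₁₃, sub_self, smul_zero, add_zero]
  have hw₂₁ : w₂ 2 = u₁ 2 := IsProj.verticalSegment_apply_two hw₂ (hu₁₃ ▸ hu₃)
  have hu₂₁ : u₂ 2 = u₁ 2 := by rw [z₂, hw₂₁, sub_self, smul_zero, add_zero]
  have hw₃₂ : w₃ 2 = u₂ 2 := by
    have hu₃₂ : u₃ 2 = u₂ 2 := hu₁₃ ▸ hu₂₁.symm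
    rw [hu₃₂, left_eq_add, smul_eq_zero, sub_eq_zero] at z₃
    exact z₃.resolve_left hε.1.ne'
  refine ⟨?_, ?_, ?_, ?_, ?_⟩ <;> linarith

theorem stmt2 (t : ℕ → ℝ) (ht : Admissible t) (ε : ℝ) (hε : ε ∈ Set.Ioo (0 : ℝ) 1)
    (u₁ u₂ u₃ w₁ w₂ w₃ : E3)
    (hc : IsCycleWithSupport C1 C2 (C3 t) ε u₁ u₂ u₃ w₁ w₂ w₃) :
    u₁ 2 = u₂ 2 ∧ u₂ 2 = u₃ 2 ∧ u₃ 2 = w₁ 2 ∧ w₁ 2 = w₂ 2 ∧ w₂ 2 = w₃ 2 :=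
  stmt2_general t ε hε u₁ u₂ u₃ w₁ w₂ w₃ hc
end
end

section
/- For each ε ∈ (0,1) there exists exactly one ε-cycle (u₁,u₂,u₃) for the sets (C₁,C₂,C₃) in ℝ³. -/
/-!
Existence: the composition of the three relaxed projections is a nonexpansive self-map of a large
ball, hence has a fixed point.

Uniqueness: summing the three relaxation inequalities along two cycles shows that they differ by a
constant vector `d`, which is also the difference of their supports. Since `C₁` is a vertical
segment, `d` is vertical, and comparing the two projections onto `C₃` shows that `d` is orthogonal
to the normal `n = u₂ - w₃`. If `d ≠ 0`, then `n` is horizontal and `C₃` contains the vertical chord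
`[w₃ - d, w₃]` on the face exposed by `n`. The cycle equations force `n` into the open first
quadrant; such a functional beats its value at the limit point `(0, 1)` of the generators, so its
face is the convex hull of at most two generators, which lie at distinct horizontal positions, and
contains no vertical chord.
-/

noncomputable section
open Real Filter

open Topology

theorem exists_fixedPoint_of_lipschitzWith_one {E : Type} [NormedAddCommGroup E]
    [NormedSpace ℝ E] {K : Set E} (hK : IsCompact K) (hKcv : Convex ℝ K) (hKne : K.Nonempty)
    {T : E → E} (hT : LipschitzWith 1 T) (hTK : Set.MapsTo T K K) : ∃ x ∈ K, T x = x := by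
  obtain ⟨x₀, hx₀⟩ := hKne
  -- fixed points of the contractions `x ↦ T x + s • (x₀ - T x)` are approximate fixed points
  -- of `T`, and `‖x - T x‖` attains its infimum on `K`
  have happrox : ∀ s ∈ Set.Ioc (0 : ℝ) 1, ∃ x ∈ K, ‖x - T x‖ ≤ s * Metric.diam K := by
    rintro s ⟨hs0, hs1⟩
    set f : E → E := fun x => T x + s • (x₀ - T x)
    have hfK : Set.MapsTo f K K := fun x hx => hKcv.add_smul_sub_mem (hTK hx) hx₀ ⟨hs0.le, hs1⟩
    have hf : ContractingWith (1 - s).toNNReal f := by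
      refine ⟨by rw [← NNReal.coe_lt_coe, Real.coe_toNNReal _ (by linarith)]; simpa using hs0, ?_⟩
      refine LipschitzWith.of_dist_le_mul fun x y => ?_
      rw [dist_eq_norm, dist_eq_norm, Real.coe_toNNReal _ (by linarith),
        show f x - f y = (1 - s) • (T x - T y) by simp only [f]; module,
        norm_smul, Real.norm_of_nonneg (by linarith), ← dist_eq_norm, ← dist_eq_norm]
      exact mul_le_mul_of_nonneg_left ((hT.dist_le_mul x y).trans_eq (by simp)) (by linarith)
    obtain ⟨x, hxK, hfix, -⟩ := ContractingWith.exists_fixedPoint' hK.isComplete hfK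
      (hf.restrict hfK) hx₀ (edist_ne_top _ _)
    refine ⟨x, hxK, ?_⟩
    have hfx : x - T x = s • (x₀ - T x) := by rw [← sub_eq_iff_eq_add'.2 hfix.symm]
    rw [hfx, norm_smul, Real.norm_of_nonneg hs0.le, ← dist_eq_norm]
    exact mul_le_mul_of_nonneg_left (Metric.dist_le_diam_of_mem hK.isBounded hx₀ (hTK hxK))
      hs0.le
  obtain ⟨a, haK, hmin⟩ := hK.exists_isMinOn ⟨x₀, hx₀⟩
    (continuous_id.sub hT.continuous).norm.continuousOn
  refine ⟨a, haK, (sub_eq_zero.1 (norm_le_zero_iff.1 ?_)).symm⟩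
  have hlim : Tendsto (fun s : ℝ => s * Metric.diam K) (𝓝[>] 0) (𝓝 0) := by
    simpa using
      tendsto_nhdsWithin_of_tendsto_nhds ((continuous_mul_const (Metric.diam K)).tendsto 0)
  refine ge_of_tendsto hlim ?_
  filter_upwards [Ioc_mem_nhdsGT one_pos] with s hs
  obtain ⟨x, hxK, hx⟩ := happrox s hs
  exact (hmin hxK).trans hx

section InnerProductSpace

variable {E : Type} [NormedAddCommGroup E] [InnerProductSpace ℝ E]

theorem IsProj.exists {C : Set E} (hne : C.Nonempty) (hC : IsComplete C) (hcv : Convex ℝ C)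
    (u : E) : ∃ w, IsProj C u w := by
  obtain ⟨w, hw, hmin⟩ := exists_norm_eq_iInf_of_complete_convex hne hC hcv u
  refine ⟨w, hw, fun v hv => ?_⟩
  rw [real_inner_comm]
  exact (norm_eq_iInf_iff_real_inner_le_zero hcv hw).1 hmin v hv

theorem IsProj.isMaxOn {C : Set E} {u w : E} (h : IsProj C u w) :
    IsMaxOn (fun v => inner ℝ (u - w) v) C w := fun v hv => by
  have := h.2 v hv
  rw [real_inner_comm, inner_sub_right] at this
  exact sub_nonpos.1 this

theorem IsProj.inner_eq_zero_of_sub {C : Set E} {u w d : E} (h : IsProj C u w)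
    (h' : IsProj C (u - d) (w - d)) : inner ℝ d (u - w) = 0 := by
  have h₁ := h.2 _ h'.1
  have h₂ := h'.2 _ h.1
  rw [show w - d - w = -d by abel, inner_neg_left] at h₁
  rw [show w - (w - d) = d by abel, show u - d - (w - d) = u - w by abel] at h₂
  linarith

theorem IsProj.norm_relax_sub_sq_le {C : Set E} {x y wx wy : E} (hx : IsProj C x wx)
    (hy : IsProj C y wy) {ε : ℝ} (hε : 0 ≤ ε) :
    ‖(x + ε • (wx - x)) - (y + ε • (wy - y))‖ ^ 2
      ≤ ‖x - y‖ ^ 2 - ε * (2 - ε) * ‖(x - wx) - (y - wy)‖ ^ 2 := by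
  set e := (x - wx) - (y - wy)
  have hmono : ‖e‖ ^ 2 ≤ inner ℝ (x - y) e := by
    have h₁ := hx.2 wy hy.1
    have h₂ := hy.2 wx hx.1
    have hsplit : x - y = (wx - wy) + e := by simp only [e]; abel
    rw [hsplit, inner_add_left, real_inner_self_eq_norm_sq]
    have : inner ℝ (wx - wy) e = - inner ℝ (wy - wx) (x - wx) - inner ℝ (wx - wy) (y - wy) := by
      rw [inner_sub_right, show wy - wx = -(wx - wy) by abel, inner_neg_left]; ring
    linarith
  rw [show (x + ε • (wx - x)) - (y + ε • (wy - y)) = (x - y) - ε • e by module,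
    norm_sub_sq_real, real_inner_smul_right, norm_smul, Real.norm_of_nonneg hε]
  nlinarith [mul_le_mul_of_nonneg_left hmono hε]

def relax (P : E → E) (ε : ℝ) (u : E) : E := u + ε • (P u - u)

theorem lipschitzWith_one_relax {C : Set E} {P : E → E} (hP : ∀ u, IsProj C u (P u)) {ε : ℝ}
    (hε₀ : 0 ≤ ε) (hε₂ : ε ≤ 2) : LipschitzWith 1 (relax P ε) := by
  refine LipschitzWith.of_dist_le_mul fun x y => ?_
  rw [NNReal.coe_one, one_mul, dist_eq_norm, dist_eq_norm]
  refine (sq_le_sq₀ (norm_nonneg _) (norm_nonneg _)).1 ?_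
  have := (hP x).norm_relax_sub_sq_le (hP y) hε₀
  have : 0 ≤ ε * (2 - ε) * ‖(x - P x) - (y - P y)‖ ^ 2 := by
    have : 0 ≤ 2 - ε := by linarith
    positivity
  unfold relax
  linarith

theorem mapsTo_relax {C K : Set E} {P : E → E} (hP : ∀ u, IsProj C u (P u)) (hK : Convex ℝ K)
    (hCK : C ⊆ K) {ε : ℝ} (hε : ε ∈ Set.Icc (0 : ℝ) 1) : Set.MapsTo (relax P ε) K K :=
  fun u hu => hK.add_smul_sub_mem hu (hCK (hP u).1) hε

theorem exists_isCycle [ProperSpace E] {C₁ C₂ C₃ : Set E} (hne₁ : C₁.Nonempty)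
    (hne₂ : C₂.Nonempty) (hne₃ : C₃.Nonempty) (hcpt₁ : IsCompact C₁) (hcpt₂ : IsCompact C₂)
    (hcpt₃ : IsCompact C₃) (hcv₁ : Convex ℝ C₁) (hcv₂ : Convex ℝ C₂) (hcv₃ : Convex ℝ C₃) {ε : ℝ}
    (hε : ε ∈ Set.Icc (0 : ℝ) 1) : ∃ u₁ u₂ u₃ : E, IsCycle C₁ C₂ C₃ ε u₁ u₂ u₃ := by
  choose P₁ hP₁ using IsProj.exists hne₁ hcpt₁.isComplete hcv₁
  choose P₂ hP₂ using IsProj.exists hne₂ hcpt₂.isComplete hcv₂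
  choose P₃ hP₃ using IsProj.exists hne₃ hcpt₃.isComplete hcv₃
  obtain ⟨R, hR⟩ :=
    (hcpt₁.isBounded.union (hcpt₂.isBounded.union hcpt₃.isBounded)).subset_closedBall 0
  have hK := convex_closedBall (0 : E) R
  have hlip := fun {C} {P : E → E} (hP : ∀ u, IsProj C u (P u)) =>
    lipschitzWith_one_relax hP hε.1 (by linarith [hε.2])
  obtain ⟨a, -, ha⟩ := exists_fixedPoint_of_lipschitzWith_one (isCompact_closedBall 0 R) hK
    (hne₁.mono (by grind)) ((hlip hP₃).comp ((hlip hP₂).comp (hlip hP₁)) |>.weaken (by simp))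
    ((mapsTo_relax hP₃ hK (by grind) hε).comp
      ((mapsTo_relax hP₂ hK (by grind) hε).comp (mapsTo_relax hP₁ hK (by grind) hε)))
  exact ⟨relax P₁ ε a, relax P₂ ε (relax P₁ ε a), a, _, _, _, hP₁ a, hP₂ _, hP₃ _, rfl, rfl,
    ha.symm⟩

section Cycle

variable {C₁ C₂ C₃ : Set E} {ε : ℝ} {u₁ u₂ u₃ w₁ w₂ w₃ v₁ v₂ v₃ x₁ x₂ x₃ : E}

/-- Summing the three relaxation inequalities around the cycle leaves no room for any loss. -/
theorem IsCycleWithSupport.sub_eq (h : IsCycleWithSupport C₁ C₂ C₃ ε u₁ u₂ u₃ w₁ w₂ w₃)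
    (h' : IsCycleWithSupport C₁ C₂ C₃ ε v₁ v₂ v₃ x₁ x₂ x₃) (hε₀ : 0 < ε) (hε₂ : ε < 2) :
    u₁ - v₁ = u₃ - v₃ ∧ u₂ - v₂ = u₃ - v₃ ∧ w₁ - x₁ = u₃ - v₃ ∧ w₃ - x₃ = u₃ - v₃ := by
  obtain ⟨hw₁, hw₂, hw₃, he₁, he₂, he₃⟩ := h
  obtain ⟨hx₁, hx₂, hx₃, hf₁, hf₂, hf₃⟩ := h'
  have A₁ := hw₁.norm_relax_sub_sq_le hx₁ hε₀.le
  have A₂ := hw₂.norm_relax_sub_sq_le hx₂ hε₀.le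
  have A₃ := hw₃.norm_relax_sub_sq_le hx₃ hε₀.le
  rw [← he₁, ← hf₁] at A₁
  rw [← he₂, ← hf₂] at A₂
  rw [← he₃, ← hf₃] at A₃
  have hκ : 0 < ε * (2 - ε) := mul_pos hε₀ (by linarith)
  have hr : ∀ r : E, ε * (2 - ε) * ‖r‖ ^ 2 ≤ 0 → r = 0 := fun r hr =>
    norm_eq_zero.1 (pow_eq_zero_iff two_ne_zero |>.1
      (le_antisymm (nonpos_of_mul_nonpos_right hr hκ) (sq_nonneg _)))
  have hpos : ∀ r : E, 0 ≤ ε * (2 - ε) * ‖r‖ ^ 2 := fun r => by positivity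
  have r₁ := hr ((u₃ - w₁) - (v₃ - x₁))
    (by linarith [hpos ((u₁ - w₂) - (v₁ - x₂)), hpos ((u₂ - w₃) - (v₂ - x₃))])
  have r₂ := hr ((u₁ - w₂) - (v₁ - x₂))
    (by linarith [hpos ((u₃ - w₁) - (v₃ - x₁)), hpos ((u₂ - w₃) - (v₂ - x₃))])
  have r₃ := hr ((u₂ - w₃) - (v₂ - x₃))
    (by linarith [hpos ((u₃ - w₁) - (v₃ - x₁)), hpos ((u₁ - w₂) - (v₁ - x₂))])
  have d₁ : u₁ - v₁ = u₃ - v₃ := by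
    linear_combination (norm := module) he₁ - hf₁ - ε • r₁
  have d₂ : u₂ - v₂ = u₃ - v₃ := by
    linear_combination (norm := module) he₂ - hf₂ - ε • r₂ + d₁
  refine ⟨d₁, d₂, ?_, ?_⟩
  · linear_combination (norm := module) -r₁
  · linear_combination (norm := module) -r₃ + d₂

/-- Going once around the cycle gives `(1 - (1 - ε)³) u₂ = ε ((1 - ε)² w₃ + (1 - ε) w₁ + w₂)`. -/
theorem IsCycleWithSupport.smul_sub_eq (h : IsCycleWithSupport C₁ C₂ C₃ ε u₁ u₂ u₃ w₁ w₂ w₃)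
    (hε : ε ≠ 0) :
    (3 - 3 * ε + ε ^ 2) • (u₂ - w₃) = (1 - ε) • w₁ + w₂ - (2 - ε) • w₃ := by
  obtain ⟨-, -, -, he₁, he₂, he₃⟩ := h
  apply smul_right_injective E hε
  linear_combination (norm := module) he₂ + (1 - ε) • he₁ + (1 - ε) ^ 2 • he₃

end Cycle

end InnerProductSpace

theorem exists_pos_forall_le_sub_of_tendsto {g : ℕ → ℝ} {L c : ℝ} (hg : Tendsto g atTop (𝓝 L))
    (hLc : L < c) : ∃ δ > 0, ∀ k, g k < c → g k ≤ c - δ := by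
  obtain ⟨K, hK⟩ := eventually_atTop.1
    (hg.eventually (eventually_lt_nhds (show L < (L + c) / 2 by linarith)))
  -- the finitely many gaps before `K`, together with the gap `(c - L) / 2` after it
  set S := insert ((c - L) / 2) (((Finset.range K).filter (g · < c)).image (c - g ·))
  have hS : S.Nonempty := Finset.insert_nonempty _ _
  refine ⟨S.min' hS, (Finset.lt_min'_iff S hS).2 fun y hy => ?_, fun k hk => ?_⟩
  · simp only [S, Finset.mem_insert, Finset.mem_image, Finset.mem_filter, Finset.mem_range] at hy
    rcases hy with rfl | ⟨k, ⟨-, hk⟩, rfl⟩ <;> linarith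
  rcases lt_or_ge k K with hkK | hkK
  · have := S.min'_le (c - g k)
      (Finset.mem_insert_of_mem (Finset.mem_image_of_mem _ (by simp [hkK, hk])))
    linarith
  · have := S.min'_le ((c - L) / 2) (Finset.mem_insert_self _ _)
    linarith [hK k hkK]

section ClosedConvexHull

variable {F : Type} [NormedAddCommGroup F] [InnerProductSpace ℝ F]

theorem inner_le_of_mem_closedConvexHull {s : Set F} {n x : F} {c : ℝ}
    (hs : ∀ y ∈ s, inner ℝ n y ≤ c) (hx : x ∈ closedConvexHull ℝ s) : inner ℝ n x ≤ c :=
  closedConvexHull_min (t := {y | inner ℝ n y ≤ c}) hs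
    (convex_halfSpace_le (innerₛₗ ℝ n).isLinear c)
    (isClosed_le (continuous_const.inner continuous_id) continuous_const) hx

/-- Tilting `n` to `n ± η e` for small `η` keeps every generator below the tilted level
`c ± η α`. -/
theorem inner_eq_of_mem_closedConvexHull_of_inner_eq {s : Set F} (hs : Bornology.IsBounded s)
    {n e : F} {c α δ : ℝ} (hδ : 0 < δ)
    (hface : ∀ y ∈ s, (inner ℝ n y = c ∧ inner ℝ e y = α) ∨ inner ℝ n y ≤ c - δ) {x : F}
    (hx : x ∈ closedConvexHull ℝ s) (hxc : inner ℝ n x = c) : inner ℝ e x = α := by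
  obtain ⟨R, hR0, hR⟩ := hs.exists_pos_norm_le
  set B := ‖e‖ * R + |α|
  have hB : ∀ y ∈ s, |inner ℝ e y - α| ≤ B := fun y hy =>
    (abs_sub _ _).trans (add_le_add_left ((abs_real_inner_le_norm e y).trans
      (mul_le_mul_of_nonneg_left (hR y hy) (norm_nonneg e))) _)
  set η := δ / (B + 1)
  have hη : 0 < η := by positivity
  have hηB : η * B < δ := by
    rw [div_mul_eq_mul_div, div_lt_iff₀ (by positivity)]
    nlinarith
  have htilt : ∀ σ : ℝ, |σ| = 1 → σ * (inner ℝ e x - α) ≤ 0 := by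
    intro σ hσ
    have := inner_le_of_mem_closedConvexHull (n := n + (σ * η) • e) (c := c + σ * η * α)
      (fun y hy => ?_) hx
    · rw [inner_add_left, real_inner_smul_left, hxc] at this
      nlinarith
    rw [inner_add_left, real_inner_smul_left]
    rcases hface y hy with ⟨hny, hey⟩ | hny
    · rw [hny, hey]
    · have : σ * η * (inner ℝ e y - α) ≤ η * B := by
        calc σ * η * (inner ℝ e y - α) ≤ |σ * η * (inner ℝ e y - α)| := le_abs_self _
          _ = η * |inner ℝ e y - α| := by rw [abs_mul, abs_mul, hσ, abs_of_pos hη, one_mul]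
          _ ≤ η * B := mul_le_mul_of_nonneg_left (hB y hy) hη.le
      nlinarith
  have h₁ := htilt 1 (by simp)
  have h₂ := htilt (-1) (by simp)
  linarith

theorem exists_inner_add_eq_inner_add (a b : F) {ya yb : ℝ} (h : a = b → ya = yb) :
    ∃ w : F, inner ℝ w a + ya = inner ℝ w b + yb := by
  by_cases hab : a = b
  · exact ⟨0, by simp [h hab]⟩
  refine ⟨((yb - ya) / ‖a - b‖ ^ 2) • (a - b), ?_⟩
  have : ‖a - b‖ ≠ 0 := norm_ne_zero_iff.2 (sub_ne_zero.2 hab)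
  have key : inner ℝ (((yb - ya) / ‖a - b‖ ^ 2) • (a - b)) (a - b) = yb - ya := by
    rw [real_inner_smul_left, real_inner_self_eq_norm_sq]
    field_simp
  rw [inner_sub_right] at key
  linarith

end ClosedConvexHull

theorem eq_or_eq_or_eq_of_sq_add_sq_eq_one {m₀ m₁ c : ℝ} (hm₁ : m₁ ≠ 0) {x₁ y₁ x₂ y₂ x₃ y₃ : ℝ}
    (h₁ : x₁ ^ 2 + y₁ ^ 2 = 1) (h₂ : x₂ ^ 2 + y₂ ^ 2 = 1) (h₃ : x₃ ^ 2 + y₃ ^ 2 = 1)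
    (l₁ : m₀ * x₁ + m₁ * y₁ = c) (l₂ : m₀ * x₂ + m₁ * y₂ = c) (l₃ : m₀ * x₃ + m₁ * y₃ = c) :
    x₁ = x₂ ∨ x₁ = x₃ ∨ x₂ = x₃ := by
  -- each `xᵢ` is a root of the same quadratic with nonzero leading coefficient `m₀² + m₁²`
  have quad : ∀ x y, x ^ 2 + y ^ 2 = 1 → m₀ * x + m₁ * y = c →
      (m₀ ^ 2 + m₁ ^ 2) * x ^ 2 - 2 * m₀ * c * x + c ^ 2 - m₁ ^ 2 = 0 := fun x y h l => by
    linear_combination m₁ ^ 2 * h - (m₁ * y - m₀ * x + c) * l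
  have hS : m₀ ^ 2 + m₁ ^ 2 ≠ 0 := by positivity
  have vieta : ∀ {x y x' y'}, x ^ 2 + y ^ 2 = 1 → m₀ * x + m₁ * y = c → x' ^ 2 + y' ^ 2 = 1 →
      m₀ * x' + m₁ * y' = c → x ≠ x' → (m₀ ^ 2 + m₁ ^ 2) * (x + x') = 2 * m₀ * c :=
    fun h l h' l' hne => by
      refine mul_left_cancel₀ (sub_ne_zero.2 hne) ?_
      linear_combination quad _ _ h l - quad _ _ h' l'
  by_contra! hne
  have := vieta h₁ l₁ h₂ l₂ hne.1
  have := vieta h₁ l₁ h₃ l₃ hne.2.1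
  exact hne.2.2 (mul_left_cancel₀ hS (by linarith))

theorem inner_E3 (x y : E3) : inner ℝ x y = x 0 * y 0 + x 1 * y 1 + x 2 * y 2 := by
  simp [PiLp.inner_apply, Fin.sum_univ_three, mul_comm]

theorem mem_C1 {x : E3} (hx : x ∈ C1) : x 0 = -2 ∧ x 1 = 2 := by
  rw [C1, convexHull_pair] at hx
  obtain ⟨a, b, -, -, hab, rfl⟩ := hx
  refine ⟨?_, ?_⟩ <;> simp only [PiLp.add_apply, PiLp.smul_apply, Matrix.cons_val_zero,
    Matrix.cons_val_one, smul_eq_mul]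
  · linear_combination (-2 : ℝ) * hab
  · linear_combination (2 : ℝ) * hab

theorem convex_Dcyl : Convex ℝ Dcyl := by
  have hcoord : ∀ i : Fin 3, ∀ {f : ℝ → ℝ}, ConvexOn ℝ Set.univ f →
      ConvexOn ℝ Set.univ fun x : E3 => f (x i) := fun i f hf =>
    hf.comp_linearMap (EuclideanSpace.proj (𝕜 := ℝ) i : E3 →L[ℝ] ℝ).toLinearMap
  have hdisk := (hcoord 0 (even_two.convexOn_pow)).add (hcoord 1 (even_two.convexOn_pow))
  convert (hdisk.convex_le 1).inter ((hcoord 2 (convexOn_norm convex_univ)).convex_le 1) using 1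
  ext; simp [Dcyl]

theorem mem_C2 {x : E3} (hx : x ∈ C2) : x 0 = 2 ∧ x 1 = 2 := by
  rw [C2, convexHull_pair] at hx
  obtain ⟨a, b, -, -, hab, rfl⟩ := hx
  refine ⟨?_, ?_⟩ <;> simp only [PiLp.add_apply, PiLp.smul_apply, Matrix.cons_val_zero,
    Matrix.cons_val_one, smul_eq_mul] <;> linear_combination (2 : ℝ) * hab

theorem isCompact_C1 : IsCompact C1 :=
  ((Set.finite_singleton _).insert _).isCompact_convexHull ℝ

theorem isCompact_C2 : IsCompact C2 :=
  ((Set.finite_singleton _).insert _).isCompact_convexHull ℝ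

theorem isClosed_Dcyl : IsClosed Dcyl := by
  rw [Dcyl, Set.ofPred_and]
  exact (isClosed_le (by fun_prop) continuous_const).inter
    (isClosed_le (by fun_prop) continuous_const)

theorem Dcyl_subset_closedBall : Dcyl ⊆ Metric.closedBall 0 2 := by
  rintro x ⟨hxy, hz⟩
  rw [mem_closedBall_zero_iff, ← sq_le_sq₀ (norm_nonneg x) zero_le_two,
    ← real_inner_self_eq_norm_sq, inner_E3]
  nlinarith [abs_le.1 hz]

theorem pSeq_mem_Dcyl (t : ℕ → ℝ) (k : ℕ) : pSeq t k ∈ Dcyl := by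
  simp [Dcyl, pSeq]

theorem C3_eq_closedConvexHull (t : ℕ → ℝ) : C3 t = closedConvexHull ℝ (pSeq t '' {k | 1 ≤ k}) :=
  closedConvexHull_eq_closure_convexHull.symm

theorem pSeq_mem_C3 (t : ℕ → ℝ) {k : ℕ} (hk : 1 ≤ k) : pSeq t k ∈ C3 t :=
  subset_closure (subset_convexHull ℝ _ ⟨k, hk, rfl⟩)

theorem C3_subset_Dcyl (t : ℕ → ℝ) : C3 t ⊆ Dcyl := by
  rw [C3_eq_closedConvexHull]
  exact closedConvexHull_min (by rintro _ ⟨k, -, rfl⟩; exact pSeq_mem_Dcyl t k) convex_Dcyl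
    isClosed_Dcyl

theorem isCompact_C3 (t : ℕ → ℝ) : IsCompact (C3 t) :=
  Metric.isCompact_of_isClosed_isBounded isClosed_closure
    (Metric.isBounded_closedBall.subset ((C3_subset_Dcyl t).trans Dcyl_subset_closedBall))

theorem inner_pSeq (n : E3) (t : ℕ → ℝ) (k : ℕ) :
    inner ℝ n (pSeq t k) = n 0 * cos (t k) + n 1 * sin (t k) + n 2 * (-1) ^ k := by
  simp [inner_E3, pSeq]

theorem inner_liftZ_pSeq (p : E2) (z : ℝ) (t : ℕ → ℝ) (k : ℕ) :
    inner ℝ (liftZ p z) (pSeq t k) = inner ℝ p (vSeq t k) + z * (-1) ^ k := by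
  rw [inner_E3]
  simp only [liftZ, pSeq, vSeq, PiLp.inner_apply, RCLike.inner_apply, ringHom_apply,
    Fin.sum_univ_two, Matrix.cons_val_zero, Matrix.cons_val_one, Matrix.cons_val]
  ring

namespace Admissible

variable {t : ℕ → ℝ} (ht : Admissible t)
include ht

theorem mem_Ico {k : ℕ} (hk : 1 ≤ k) : t k ∈ Set.Ico (π / 4) (π / 2) := by
  have hmono := ht.1.monotoneOn
  refine ⟨ht.2.1 ▸ hmono (Set.mem_Ici.2 le_rfl) hk hk, ?_⟩
  refine (ht.1 hk (Set.mem_Ici.2 (by omega)) (lt_add_one k)).trans_le ?_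
  exact ge_of_tendsto ht.2.2 (eventually_atTop.2 ⟨k + 1, fun j hj =>
    hmono (Set.mem_Ici.2 (by omega)) (Set.mem_Ici.2 (by omega)) hj⟩)

theorem tendsto_cos : Tendsto (fun k => cos (t k)) atTop (𝓝 0) := by
  simpa [Function.comp_def] using (continuous_cos.tendsto _).comp ht.2.2

theorem tendsto_sin : Tendsto (fun k => sin (t k)) atTop (𝓝 1) := by
  simpa [Function.comp_def] using (continuous_sin.tendsto _).comp ht.2.2

theorem cos_injOn : Set.InjOn (fun k => cos (t k)) (Set.Ici 1) := by
  refine injOn_cos.comp ht.1.injOn fun k hk => ?_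
  have := ht.mem_Ico hk
  constructor <;> linarith [this.1, this.2, pi_pos]

theorem tendsto_inner_pSeq {n : E3} (hn2 : n 2 = 0) :
    Tendsto (fun k => inner ℝ n (pSeq t k)) atTop (𝓝 (n 1)) := by
  simpa [inner_pSeq, hn2] using
    (ht.tendsto_cos.const_mul (n 0)).add (ht.tendsto_sin.const_mul (n 1))

theorem le_inner_of_isMaxOn {n w : E3} (hn2 : n 2 = 0)
    (hw : IsMaxOn (fun v => inner ℝ n v) (C3 t) w) : n 1 ≤ inner ℝ n w :=
  le_of_tendsto (ht.tendsto_inner_pSeq hn2)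
    (eventually_atTop.2 ⟨1, fun _ hk => hw (pSeq_mem_C3 t hk)⟩)

/-- `1 - sin θ` is of second order in `cos θ`, so near `π / 2` the term `n₀ cos θ` wins. -/
theorem exists_lt_inner_pSeq {n : E3} (hn0 : 0 < n 0) (hn1 : 0 ≤ n 1) (hn2 : n 2 = 0) :
    ∃ k, 1 ≤ k ∧ n 1 < inner ℝ n (pSeq t k) := by
  have hsmall : ∀ᶠ k in atTop, n 1 * cos (t k) < n 0 :=
    (ht.tendsto_cos.const_mul (n 1)).eventually (eventually_lt_nhds (by simpa using hn0))
  obtain ⟨k, hk, hsmall⟩ := ((eventually_ge_atTop 1).and hsmall).exists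
  refine ⟨k, hk, ?_⟩
  obtain ⟨hlo, hhi⟩ := ht.mem_Ico hk
  have hcos : 0 < cos (t k) := cos_pos_of_mem_Ioo ⟨by linarith [pi_pos], hhi⟩
  have hsin : 0 ≤ sin (t k) := sin_nonneg_of_nonneg_of_le_pi (by linarith [pi_pos]) (by linarith)
  rw [inner_pSeq, hn2]
  nlinarith [cos_sq_add_sin_sq (t k), mul_pos hcos (sub_pos.2 hsmall),
    mul_nonneg hn1 (mul_nonneg hsin (sub_nonneg.2 (sin_le_one (t k))))]

theorem exists_forall_inner_pSeq_eq {n : E3} (hn1 : n 1 ≠ 0) (hn2 : n 2 = 0) (c : ℝ) :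
    ∃ a b, 1 ≤ a ∧ 1 ≤ b ∧ ∀ k, 1 ≤ k → inner ℝ n (pSeq t k) = c → k = a ∨ k = b := by
  have three : ∀ i j l, 1 ≤ i → 1 ≤ j → 1 ≤ l → inner ℝ n (pSeq t i) = c →
      inner ℝ n (pSeq t j) = c → inner ℝ n (pSeq t l) = c → i = j ∨ i = l ∨ j = l := by
    intro i j l hi hj hl hgi hgj hgl
    simp only [inner_pSeq, hn2, zero_mul, add_zero] at hgi hgj hgl
    rcases eq_or_eq_or_eq_of_sq_add_sq_eq_one hn1 (cos_sq_add_sin_sq (t i))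
      (cos_sq_add_sin_sq (t j)) (cos_sq_add_sin_sq (t l)) hgi hgj hgl with h | h | h
    · exact Or.inl (ht.cos_injOn hi hj h)
    · exact Or.inr (Or.inl (ht.cos_injOn hi hl h))
    · exact Or.inr (Or.inr (ht.cos_injOn hj hl h))
  by_cases h₁ : ∃ a, 1 ≤ a ∧ inner ℝ n (pSeq t a) = c
  · obtain ⟨a, ha, hga⟩ := h₁
    by_cases h₂ : ∃ b, 1 ≤ b ∧ inner ℝ n (pSeq t b) = c ∧ b ≠ a
    · obtain ⟨b, hb, hgb, hba⟩ := h₂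
      refine ⟨a, b, ha, hb, fun k hk hgk => ?_⟩
      rcases three a b k ha hb hk hga hgb hgk with h | h | h
      · exact absurd h.symm hba
      · exact Or.inl h.symm
      · exact Or.inr h.symm
    · push Not at h₂
      exact ⟨a, a, ha, ha, fun k hk hgk => Or.inl (h₂ k hk hgk)⟩
  · push Not at h₁
    exact ⟨1, 1, le_rfl, le_rfl, fun k hk hgk => absurd hgk (h₁ k hk)⟩

/-- The face exposed by `⟪n, ·⟫` lies strictly above the limit point `(0, 1)` of the generators,
so it is the convex hull of at most two of them, which have distinct horizontal positions; hence it
contains no vertical segment. -/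
theorem apply_two_eq_zero_of_isMaxOn {n w d : E3} (hn0 : 0 < n 0) (hn1 : 0 < n 1) (hn2 : n 2 = 0)
    (hw : IsMaxOn (fun v => inner ℝ n v) (C3 t) w) (hwC : w ∈ C3 t) (hwdC : w - d ∈ C3 t)
    (hd0 : d 0 = 0) (hd1 : d 1 = 0) : d 2 = 0 := by
  set c := inner ℝ n w
  have hc : n 1 < c := by
    obtain ⟨k, hk, hlt⟩ := ht.exists_lt_inner_pSeq hn0 hn1.le hn2
    exact hlt.trans_le (hw (pSeq_mem_C3 t hk))
  obtain ⟨δ, hδ, hgap⟩ := exists_pos_forall_le_sub_of_tendsto (ht.tendsto_inner_pSeq hn2) hc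
  obtain ⟨a, b, ha, hb, hab⟩ := ht.exists_forall_inner_pSeq_eq hn1.ne' hn2 c
  obtain ⟨p, hp⟩ := exists_inner_add_eq_inner_add (vSeq t a) (vSeq t b)
    (ya := (-1) ^ a) (yb := (-1) ^ b) fun h => by
      rw [ht.cos_injOn ha hb (by simpa [vSeq] using congrArg (· 0) h)]
  have hface : ∀ y ∈ pSeq t '' {k | 1 ≤ k}, (inner ℝ n y = c ∧
      inner ℝ (liftZ p 1) y = inner ℝ p (vSeq t a) + (-1) ^ a) ∨ inner ℝ n y ≤ c - δ := by
    rintro _ ⟨k, hk, rfl⟩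
    rcases (show inner ℝ n (pSeq t k) ≤ c from hw (pSeq_mem_C3 t hk)).lt_or_eq with hlt | heq
    · exact Or.inr (hgap k hlt)
    · refine Or.inl ⟨heq, ?_⟩
      rcases hab k hk heq with rfl | rfl <;> simp [inner_liftZ_pSeq, hp]
  have hbdd : Bornology.IsBounded (pSeq t '' {k | 1 ≤ k}) :=
    Metric.isBounded_closedBall.subset fun _ ⟨k, _, hk⟩ =>
      hk ▸ Dcyl_subset_closedBall (pSeq_mem_Dcyl t k)
  have hw' := inner_eq_of_mem_closedConvexHull_of_inner_eq hbdd hδ hface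
    (C3_eq_closedConvexHull t ▸ hwC) rfl
  have hwd' := inner_eq_of_mem_closedConvexHull_of_inner_eq hbdd hδ hface
    (C3_eq_closedConvexHull t ▸ hwdC) (by simp [c, inner_sub_right, inner_E3 n d, hd0, hd1, hn2])
  rw [inner_sub_right, hw', sub_eq_self, inner_E3] at hwd'
  simpa [liftZ, hd0, hd1] using hwd'

end Admissible

section Uniqueness

variable {t : ℕ → ℝ} {ε : ℝ} {u₁ u₂ u₃ w₁ w₂ w₃ v₁ v₂ v₃ x₁ x₂ x₃ : E3}

theorem IsCycleWithSupport.normal_pos (ht : Admissible t) (hε : ε ∈ Set.Ioo (0 : ℝ) 1)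
    (h : IsCycleWithSupport C1 C2 (C3 t) ε u₁ u₂ u₃ w₁ w₂ w₃) (hn2 : (u₂ - w₃) 2 = 0) :
    0 < (u₂ - w₃) 0 ∧ 0 < (u₂ - w₃) 1 := by
  obtain ⟨hε₀, hε₁⟩ := hε
  have hc := ht.le_inner_of_isMaxOn hn2 h.2.2.1.isMaxOn
  rw [inner_E3, hn2, zero_mul, add_zero] at hc
  have hcyc := congrArg (fun x : E3 => (x 0, x 1)) (h.smul_sub_eq hε₀.ne')
  simp only [PiLp.add_apply, PiLp.sub_apply, PiLp.smul_apply, smul_eq_mul, Prod.mk.injEq,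
    (mem_C1 h.1.1).1, (mem_C1 h.1.1).2, (mem_C2 h.2.1.1).1, (mem_C2 h.2.1.1).2] at hcyc hc ⊢
  obtain ⟨hn0, hn1⟩ := hcyc
  obtain ⟨hdisk, -⟩ := C3_subset_Dcyl t h.2.2.1.1
  have hκ : 0 < 3 - 3 * ε + ε ^ 2 := by nlinarith
  have hq1 : w₃ 1 ≤ 1 := by nlinarith [sq_nonneg (w₃ 0), sq_nonneg (w₃ 1 - 1)]
  have hn1pos : 0 < u₂ 1 - w₃ 1 := pos_of_mul_pos_right (by rw [hn1]; nlinarith) hκ.le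
  refine ⟨lt_of_not_ge fun hn0neg => ?_, hn1pos⟩
  -- otherwise `w₃` is pushed to the limit point `(0, 1)`, against the first coordinate equation
  have hq0 : 0 < w₃ 0 := pos_of_mul_pos_right
    (by nlinarith [mul_nonpos_of_nonneg_of_nonpos hκ.le hn0neg]) (by linarith : 0 ≤ 2 - ε)
  have hq1' : 1 ≤ w₃ 1 := by nlinarith [mul_nonpos_of_nonpos_of_nonneg hn0neg hq0.le]
  nlinarith

theorem IsCycleWithSupport.eq_of_admissible (ht : Admissible t) (hε : ε ∈ Set.Ioo (0 : ℝ) 1)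
    (h : IsCycleWithSupport C1 C2 (C3 t) ε u₁ u₂ u₃ w₁ w₂ w₃)
    (h' : IsCycleWithSupport C1 C2 (C3 t) ε v₁ v₂ v₃ x₁ x₂ x₃) :
    (u₁, u₂, u₃) = (v₁, v₂, v₃) := by
  obtain ⟨d₁, d₂, dw₁, dw₃⟩ := h.sub_eq h' hε.1 (by linarith [hε.2])
  set d := u₃ - v₃
  have hd0 : d 0 = 0 := by simp [← dw₁, (mem_C1 h.1.1).1, (mem_C1 h'.1.1).1]
  have hd1 : d 1 = 0 := by simp [← dw₁, (mem_C1 h.1.1).2, (mem_C1 h'.1.1).2]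
  have hd2 : d 2 = 0 := by
    have hw₃ := h.2.2.1
    have hx₃ : IsProj (C3 t) (u₂ - d) (w₃ - d) := by
      rw [show u₂ - d = v₂ by rw [← d₂]; abel, show w₃ - d = x₃ by rw [← dw₃]; abel]
      exact h'.2.2.1
    have horth := hw₃.inner_eq_zero_of_sub hx₃
    rw [inner_E3, hd0, hd1, zero_mul, zero_mul, zero_add, zero_add, mul_eq_zero] at horth
    refine horth.elim id fun hn2 => ?_
    obtain ⟨hn0, hn1⟩ := h.normal_pos ht hε hn2
    exact ht.apply_two_eq_zero_of_isMaxOn hn0 hn1 hn2 hw₃.isMaxOn hw₃.1 hx₃.1 hd0 hd1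
  have hd : d = 0 := by ext i; fin_cases i <;> assumption
  simp only [Prod.mk.injEq]
  exact ⟨sub_eq_zero.1 (d₁.trans hd), sub_eq_zero.1 (d₂.trans hd), sub_eq_zero.1 hd⟩

end Uniqueness

theorem stmt6 (t : ℕ → ℝ) (ht : Admissible t) (ε : ℝ) (hε : ε ∈ Set.Ioo (0 : ℝ) 1) :
    ∃! u : E3 × E3 × E3, IsCycle C1 C2 (C3 t) ε u.1 u.2.1 u.2.2 := by
  obtain ⟨u₁, u₂, u₃, hu⟩ := exists_isCycle
    ⟨_, subset_convexHull ℝ _ (Set.mem_insert _ _)⟩ ⟨_, subset_convexHull ℝ _ (Set.mem_insert _ _)⟩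
    ⟨_, pSeq_mem_C3 t le_rfl⟩ isCompact_C1 isCompact_C2 (isCompact_C3 t)
    (convex_convexHull ℝ _) (convex_convexHull ℝ _) (convex_convexHull ℝ _).closure
    (Set.Ioo_subset_Icc_self hε)
  refine ⟨(u₁, u₂, u₃), hu, fun ⟨v₁, v₂, v₃⟩ ⟨x₁, x₂, x₃, hv⟩ => ?_⟩
  obtain ⟨w₁, w₂, w₃, hw⟩ := hu
  exact hv.eq_of_admissible ht hε hw
end
end

section
/- Let k ≥ 1, let d_k = (v_{k+1} − v_k)/‖v_{k+1} − v_k‖, and let c = (1−s)v_k + s·v_{k+1} with s ∈ [0,1). Set ε(c) = 1 + ⟨b − c, d_k⟩/⟨a − c, d_k⟩. Then ε(c) ∈ (0,1), and the triple (u₁',u₂',u₃') defined by u₁' = ((1−ε)²b + (1−ε)c + a)/(ε²−3ε+3), u₂' = ((1−ε)²c + (1−ε)a + b)/(ε²−3ε+3), u₃' = ((1−ε)²a + (1−ε)b + c)/(ε²−3ε+3) with ε = ε(c) is an ε(c)-cycle for (C₁',C₂',C₃') with support (w₁',w₂',w₃') = (a,b,c). -/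
noncomputable section
open Real Filter

/-!
Write `D = ε² - 3ε + 3` and `u(x, y, z) = D⁻¹ ((1-ε)² y + (1-ε) z + x)`, so that
`(u₁', u₂', u₃') = (u(a,b,c), u(b,c,a), u(c,a,b))`. The three cycle equations are cyclic
instances of the single identity `u(x,y,z) = u(z,x,y) + ε (x - u(z,x,y))`, which holds because
`(1-ε)³ + ε D = 1`; the projections onto the singletons `{a}` and `{b}` are trivial.

For the projection onto `C₃'`, write `t_k = μ - δ` and `t_{k+1} = μ + δ`. The chord `[v_k, v_{k+1}]`
has direction `d = (-sin μ, cos μ)` and lies on the line `⟪x, n⟫ = cos δ` with `n = (cos μ, sin μ)`,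
while `⟪v_j, n⟫ = cos (t_j - μ) ≤ cos δ` for every `j`, so `C₃'` lies in the half-plane
`⟪x, n⟫ ≤ cos δ`. The value `ε(c)` is exactly the one making
`u₂' - c = D⁻¹ ((1-ε)(a - c) + (b - c))` orthogonal to `d`, hence a multiple of `n`, and that
multiple is nonnegative; so `c` is the projection of `u₂'`. Finally `0 < ε(c) < 1` and the sign of
the multiple reduce to elementary trigonometric inequalities from `π/4 ≤ t_k < t_{k+1} < π/2`.
-/

open scoped RealInnerProductSpace

section Cycle

variable {E : Type} [AddCommGroup E] [Module ℝ E]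

def cyclePoint (ε : ℝ) (x y z : E) : E :=
  (ε ^ 2 - 3 * ε + 3)⁻¹ • ((1 - ε) ^ 2 • y + (1 - ε) • z + x)

theorem cycle_denom_pos (ε : ℝ) : 0 < ε ^ 2 - 3 * ε + 3 := by
  nlinarith [sq_nonneg (ε - 3 / 2)]

theorem cyclePoint_eq_add_smul_sub (ε : ℝ) (x y z : E) :
    cyclePoint ε x y z = cyclePoint ε z x y + ε • (x - cyclePoint ε z x y) := by
  unfold cyclePoint
  set D := ε ^ 2 - 3 * ε + 3 with hD_def
  have hD : D ≠ 0 := (cycle_denom_pos ε).ne'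
  match_scalars <;> field_simp <;> linear_combination (-ε) * hD_def

theorem cyclePoint_sub (ε : ℝ) (x y z : E) :
    cyclePoint ε x y z - y = (ε ^ 2 - 3 * ε + 3)⁻¹ • ((1 - ε) • (z - y) + (x - y)) := by
  unfold cyclePoint
  set D := ε ^ 2 - 3 * ε + 3 with hD_def
  have hD : D ≠ 0 := (cycle_denom_pos ε).ne'
  match_scalars <;> field_simp
  linear_combination hD_def

end Cycle

section InnerProduct

variable {E : Type} [NormedAddCommGroup E] [InnerProductSpace ℝ E]

theorem isProj_singleton (a u : E) : IsProj {a} u a :=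
  ⟨rfl, fun v hv => by rw [hv, sub_self, inner_zero_left]⟩

theorem isProj_of_inner_le {C : Set E} {u w n : E} {r : ℝ} (hw : w ∈ C)
    (hC : ∀ v ∈ C, ⟪v, n⟫ ≤ ⟪w, n⟫) (hr : 0 ≤ r) (hu : u - w = r • n) : IsProj C u w := by
  refine ⟨hw, fun v hv => ?_⟩
  rw [hu, real_inner_smul_right, inner_sub_left]
  exact mul_nonpos_of_nonneg_of_nonpos hr (sub_nonpos.2 (hC v hv))

theorem closure_convexHull_subset_setOf_inner_le {S : Set E} {n : E} {r : ℝ}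
    (h : ∀ x ∈ S, ⟪x, n⟫ ≤ r) : closure (convexHull ℝ S) ⊆ {x | ⟪x, n⟫ ≤ r} :=
  closure_minimal
    (convexHull_min h (convex_halfSpace_le
      ⟨fun x y => inner_add_left x y n, fun a x => real_inner_smul_left x n a⟩ r))
    (isClosed_le (by fun_prop) continuous_const)

theorem isCycleWithSupport_cyclePoint {C₁ C₂ C₃ : Set E} {ε : ℝ} {a b c : E}
    (h₁ : IsProj C₁ (cyclePoint ε c a b) a) (h₂ : IsProj C₂ (cyclePoint ε a b c) b)
    (h₃ : IsProj C₃ (cyclePoint ε b c a) c) :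
    IsCycleWithSupport C₁ C₂ C₃ ε (cyclePoint ε a b c) (cyclePoint ε b c a) (cyclePoint ε c a b)
      a b c :=
  ⟨h₁, h₂, h₃, cyclePoint_eq_add_smul_sub .., cyclePoint_eq_add_smul_sub ..,
    cyclePoint_eq_add_smul_sub ..⟩

end InnerProduct

section Plane

def unitVec (θ : ℝ) : E2 := WithLp.toLp 2 ![cos θ, sin θ]

def tangentVec (θ : ℝ) : E2 := WithLp.toLp 2 ![-sin θ, cos θ]

theorem inner_E2 (x y : E2) : ⟪x, y⟫ = x 0 * y 0 + x 1 * y 1 := by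
  simp only [PiLp.inner_apply, Fin.sum_univ_two, RCLike.inner_apply, conj_trivial]
  ring

theorem vSeq_eq_unitVec (t : ℕ → ℝ) (k : ℕ) : vSeq t k = unitVec (t k) := rfl

theorem inner_unitVec_unitVec (θ φ : ℝ) : ⟪unitVec θ, unitVec φ⟫ = cos (θ - φ) := by
  simp [inner_E2, unitVec, cos_sub]

theorem inner_unitVec_tangentVec (θ φ : ℝ) : ⟪unitVec θ, tangentVec φ⟫ = sin (θ - φ) := by
  simp only [inner_E2, unitVec, tangentVec, Matrix.cons_val_zero, Matrix.cons_val_one,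
    Matrix.cons_val_fin_one, sin_sub]
  ring

theorem norm_tangentVec (θ : ℝ) : ‖tangentVec θ‖ = 1 := by
  rw [norm_eq_sqrt_real_inner, inner_E2]
  simp [tangentVec, ← sq]

theorem unitVec_add_sub_unitVec_sub (μ δ : ℝ) :
    unitVec (μ + δ) - unitVec (μ - δ) = (2 * sin δ) • tangentVec μ := by
  ext i
  fin_cases i <;>
    simp only [unitVec, tangentVec, PiLp.sub_apply, PiLp.smul_apply, smul_eq_mul, Fin.zero_eta,
      Fin.mk_one, Matrix.cons_val_zero, Matrix.cons_val_one, Matrix.cons_val_fin_one, cos_add,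
      cos_sub, sin_add, sin_sub] <;>
    ring

theorem inv_norm_smul_unitVec_add_sub_unitVec_sub (μ : ℝ) {δ : ℝ} (h₀ : 0 < δ) (h₁ : δ < π) :
    ‖unitVec (μ + δ) - unitVec (μ - δ)‖⁻¹ • (unitVec (μ + δ) - unitVec (μ - δ)) =
      tangentVec μ := by
  have hsin : 0 < 2 * sin δ := mul_pos two_pos (sin_pos_of_pos_of_lt_pi h₀ h₁)
  rw [unitVec_add_sub_unitVec_sub, norm_smul, norm_tangentVec, mul_one, norm_of_nonneg hsin.le,
    smul_smul, inv_mul_cancel₀ hsin.ne', one_smul]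

theorem eq_inner_smul_unitVec {w : E2} {θ : ℝ} (h : ⟪w, tangentVec θ⟫ = 0) :
    w = ⟪w, unitVec θ⟫ • unitVec θ := by
  ext i
  fin_cases i <;>
    simp only [inner_E2, unitVec, tangentVec, PiLp.smul_apply, smul_eq_mul, Fin.zero_eta,
      Fin.mk_one, Matrix.cons_val_zero, Matrix.cons_val_one, Matrix.cons_val_fin_one] at h ⊢
  · linear_combination (-(w 0)) * sin_sq_add_cos_sq θ - sin θ * h
  · linear_combination (-(w 1)) * sin_sq_add_cos_sq θ + cos θ * h

end Plane

section Chord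

theorem one_le_sin_add_cos {μ : ℝ} (h₀ : 0 ≤ μ) (h₁ : μ ≤ π / 2) : 1 ≤ sin μ + cos μ := by
  have hs := sin_nonneg_of_nonneg_of_le_pi h₀ (by linarith [pi_pos])
  have hc := cos_nonneg_of_mem_Icc ⟨by linarith [pi_pos], h₁⟩
  nlinarith [sin_sq_add_cos_sq μ, mul_nonneg hs hc]

theorem sin_lt_cos_of_add_lt_pi_div_two {μ δ : ℝ} (hδ : -(π / 2) ≤ δ) (hμ : 0 ≤ μ)
    (h : μ + δ < π / 2) : sin δ < cos μ := by
  rw [← sin_pi_div_two_sub]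
  exact sin_lt_sin_of_lt_of_le_pi_div_two hδ (by linarith) (by linarith)

theorem sin_lt_sin_sub_cos {μ δ : ℝ} (hδ : 0 < δ) (hlo : π / 4 ≤ μ - δ) (hhi : μ ≤ π / 2) :
    sin δ < sin μ - cos μ := by
  have hsinδ : 0 < sin δ := sin_pos_of_pos_of_lt_pi hδ (by linarith [pi_pos])
  have hle : sin δ ≤ sin (μ - π / 4) :=
    sin_le_sin_of_le_of_le_pi_div_two (by linarith [pi_pos]) (by linarith) (by linarith)
  have hsin : sin (μ - π / 4) = (sin μ - cos μ) * (√2 / 2) := by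
    rw [sin_sub, cos_pi_div_four, sin_pi_div_four]
    ring
  have hsqrt : √2 < 2 := by
    rw [sqrt_lt' two_pos]
    norm_num
  nlinarith [sqrt_nonneg 2]

theorem one_add_div_mem_Ioo {p q : ℝ} (hp : 0 < p) (hq : q < 0) (hpq : 0 < p + q) :
    1 + q / p ∈ Set.Ioo 0 1 := by
  have hneg : q / p < 0 := div_neg_of_neg_of_pos hq hp
  have hgt : -1 < q / p := by
    rw [lt_div_iff₀ hp]
    linarith
  constructor <;> linarith

def chordPt (μ δ s : ℝ) : E2 := (1 - s) • unitVec (μ - δ) + s • unitVec (μ + δ)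

theorem inner_chordPt_unitVec (μ δ s : ℝ) : ⟪chordPt μ δ s, unitVec μ⟫ = cos δ := by
  simp only [chordPt, inner_add_left, real_inner_smul_left, inner_unitVec_unitVec,
    sub_sub_cancel_left, add_sub_cancel_left, cos_neg]
  ring

theorem inner_chordPt_tangentVec (μ δ s : ℝ) :
    ⟪chordPt μ δ s, tangentVec μ⟫ = (2 * s - 1) * sin δ := by
  simp only [chordPt, inner_add_left, real_inner_smul_left, inner_unitVec_tangentVec,
    sub_sub_cancel_left, add_sub_cancel_left, sin_neg]
  ring

theorem inner_aPt_sub_chordPt_unitVec (μ δ s : ℝ) :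
    ⟪aPt - chordPt μ δ s, unitVec μ⟫ = 2 * sin μ - 2 * cos μ - cos δ := by
  rw [inner_sub_left, inner_chordPt_unitVec]
  simp only [inner_E2, aPt, unitVec, Matrix.cons_val_zero, Matrix.cons_val_one,
    Matrix.cons_val_fin_one]
  ring

theorem inner_bPt_sub_chordPt_unitVec (μ δ s : ℝ) :
    ⟪bPt - chordPt μ δ s, unitVec μ⟫ = 2 * cos μ + 2 * sin μ - cos δ := by
  rw [inner_sub_left, inner_chordPt_unitVec]
  simp [inner_E2, bPt, unitVec]

theorem inner_aPt_sub_chordPt_tangentVec (μ δ s : ℝ) :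
    ⟪aPt - chordPt μ δ s, tangentVec μ⟫ = 2 * sin μ + 2 * cos μ - (2 * s - 1) * sin δ := by
  rw [inner_sub_left, inner_chordPt_tangentVec]
  simp [inner_E2, aPt, tangentVec]

theorem inner_bPt_sub_chordPt_tangentVec (μ δ s : ℝ) :
    ⟪bPt - chordPt μ δ s, tangentVec μ⟫ = 2 * cos μ - 2 * sin μ - (2 * s - 1) * sin δ := by
  rw [inner_sub_left, inner_chordPt_tangentVec]
  simp only [inner_E2, bPt, tangentVec, Matrix.cons_val_zero, Matrix.cons_val_one,
    Matrix.cons_val_fin_one]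
  ring

def chordEps (μ δ s : ℝ) : ℝ :=
  1 + ⟪bPt - chordPt μ δ s, tangentVec μ⟫ / ⟪aPt - chordPt μ δ s, tangentVec μ⟫

section

variable {μ δ s : ℝ} (hδ : 0 < δ) (hlo : π / 4 ≤ μ - δ) (hhi : μ + δ < π / 2)
  (hs : s ∈ Set.Icc (0 : ℝ) 1)
include hδ hlo hhi hs

theorem inner_aPt_sub_chordPt_tangentVec_pos : 0 < ⟪aPt - chordPt μ δ s, tangentVec μ⟫ := by
  have hsinδ : 0 < sin δ := sin_pos_of_pos_of_lt_pi hδ (by linarith [pi_pos])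
  have hsum : 1 ≤ sin μ + cos μ := one_le_sin_add_cos (by linarith [pi_pos]) (by linarith)
  rw [inner_aPt_sub_chordPt_tangentVec]
  nlinarith [sin_le_one δ, hs.2]

theorem chordEps_mem_Ioo : chordEps μ δ s ∈ Set.Ioo 0 1 := by
  have hsinδ : 0 < sin δ := sin_pos_of_pos_of_lt_pi hδ (by linarith [pi_pos])
  have hcosμ : sin δ < cos μ :=
    sin_lt_cos_of_add_lt_pi_div_two (by linarith) (by linarith [pi_pos]) hhi
  have hdiff : sin δ < sin μ - cos μ := sin_lt_sin_sub_cos hδ hlo (by linarith)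
  have hs₁ : (2 * s - 1) * sin δ ≤ sin δ := by nlinarith [hs.2]
  have hs₀ : -sin δ ≤ (2 * s - 1) * sin δ := by nlinarith [hs.1]
  refine one_add_div_mem_Ioo (inner_aPt_sub_chordPt_tangentVec_pos hδ hlo hhi hs) ?_ ?_ <;>
    simp only [inner_aPt_sub_chordPt_tangentVec, inner_bPt_sub_chordPt_tangentVec] <;>
    linarith

theorem isProj_chordPt {C : Set E2} (hcC : chordPt μ δ s ∈ C)
    (hC : ∀ v ∈ C, ⟪v, unitVec μ⟫ ≤ cos δ) :
    IsProj C (cyclePoint (chordEps μ δ s) bPt (chordPt μ δ s) aPt) (chordPt μ δ s) := by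
  obtain ⟨hε₀, hε₁⟩ := chordEps_mem_Ioo hδ hlo hhi hs
  have hsum : 1 ≤ sin μ + cos μ := one_le_sin_add_cos (by linarith [pi_pos]) (by linarith)
  have hsinμ : 1 / 2 < sin μ := by
    nlinarith [sin_sq_add_cos_sq μ, sin_lt_sin_sub_cos hδ hlo (by linarith),
      sin_pos_of_pos_of_lt_pi hδ (by linarith [pi_pos])]
  have hcosδ : cos δ ≤ 1 := cos_le_one δ
  set w := (1 - chordEps μ δ s) • (aPt - chordPt μ δ s) + (bPt - chordPt μ δ s) with hw
  -- `chordEps` is defined so that `u₂ - c`, a multiple of `w` by `cyclePoint_sub`, is normal to the chord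
  have hwτ : ⟪w, tangentVec μ⟫ = 0 := by
    have := (inner_aPt_sub_chordPt_tangentVec_pos hδ hlo hhi hs).ne'
    rw [hw, chordEps, inner_add_left, real_inner_smul_left]
    field_simp
    ring
  have hwn : 0 ≤ ⟪w, unitVec μ⟫ := by
    rw [hw, inner_add_left, real_inner_smul_left, inner_aPt_sub_chordPt_unitVec,
      inner_bPt_sub_chordPt_unitVec]
    nlinarith [mul_pos hε₀ (show 0 < 2 * cos μ + 2 * sin μ - cos δ by linarith),
      mul_pos (sub_pos.2 hε₁) (show 0 < 4 * sin μ - 2 * cos δ by linarith)]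
  refine isProj_of_inner_le hcC
    (fun v hv => (hC v hv).trans_eq (inner_chordPt_unitVec μ δ s).symm)
    (mul_nonneg (inv_nonneg.2 (cycle_denom_pos (chordEps μ δ s)).le) hwn) ?_
  rw [cyclePoint_sub, mul_smul, ← eq_inner_smul_unitVec hwτ]

end

end Chord

section Admissible

variable {t : ℕ → ℝ}

theorem Admissible.pi_div_four_le (ht : Admissible t) {j : ℕ} (hj : 1 ≤ j) : π / 4 ≤ t j := by
  rw [← ht.2.1]
  exact ht.1.monotoneOn (Set.mem_Ici.2 le_rfl) hj hj

theorem Admissible.lt_pi_div_two (ht : Admissible t) {j : ℕ} (hj : 1 ≤ j) : t j < π / 2 := by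
  have hle : t (j + 1) ≤ π / 2 :=
    ge_of_tendsto ht.2.2 (eventually_atTop.2 ⟨j + 1, fun n hn =>
      ht.1.monotoneOn (Set.mem_Ici.2 (by omega)) (Set.mem_Ici.2 (by omega)) hn⟩)
  exact (ht.1 (Set.mem_Ici.2 hj) (Set.mem_Ici.2 (by omega)) (Nat.lt_succ_self j)).trans_le hle

theorem Admissible.inner_vSeq_unitVec_le (ht : Admissible t) {j k : ℕ} (hj : 1 ≤ j)
    (hk : 1 ≤ k) :
    ⟪vSeq t j, unitVec ((t k + t (k + 1)) / 2)⟫ ≤ cos ((t (k + 1) - t k) / 2) := by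
  have hk' : 1 ≤ k + 1 := by omega
  have hmono : t k < t (k + 1) := ht.1 (Set.mem_Ici.2 hk) (Set.mem_Ici.2 hk') (by omega)
  have := ht.pi_div_four_le hj
  have := ht.pi_div_four_le hk
  have := ht.lt_pi_div_two hj
  have := ht.lt_pi_div_two hk'
  rw [vSeq_eq_unitVec, inner_unitVec_unitVec, ← cos_abs]
  refine cos_le_cos_of_nonneg_of_le_pi (by linarith) (abs_le.2 ⟨by linarith, by linarith⟩) ?_
  rcases le_or_gt j k with hjk | hjk
  · have := ht.1.monotoneOn (Set.mem_Ici.2 hj) (Set.mem_Ici.2 hk) hjk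
    exact le_abs.2 (Or.inr (by linarith))
  · have := ht.1.monotoneOn (Set.mem_Ici.2 hk') (Set.mem_Ici.2 hj) hjk
    exact le_abs.2 (Or.inl (by linarith))

theorem segment_vSeq_subset_C3' {j k : ℕ} (hj : 1 ≤ j) (hk : 1 ≤ k) :
    segment ℝ (vSeq t j) (vSeq t k) ⊆ C3' t :=
  (segment_subset_convexHull (Set.mem_image_of_mem _ hj) (Set.mem_image_of_mem _ hk)).trans
    subset_closure

end Admissible

theorem stmt7 (t : ℕ → ℝ) (ht : Admissible t) (k : ℕ) (hk : 1 ≤ k)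
    (s : ℝ) (hs : s ∈ Set.Ico (0 : ℝ) 1) :
    let d : E2 := ‖vSeq t (k + 1) - vSeq t k‖⁻¹ • (vSeq t (k + 1) - vSeq t k)
    let c : E2 := (1 - s) • vSeq t k + s • vSeq t (k + 1)
    let ε : ℝ := 1 + ip (bPt - c) d / ip (aPt - c) d
    ε ∈ Set.Ioo (0 : ℝ) 1 ∧
    IsCycleWithSupport C1' C2' (C3' t) ε
      ((ε ^ 2 - 3 * ε + 3)⁻¹ • ((1 - ε) ^ 2 • bPt + (1 - ε) • c + aPt))
      ((ε ^ 2 - 3 * ε + 3)⁻¹ • ((1 - ε) ^ 2 • c + (1 - ε) • aPt + bPt))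
      ((ε ^ 2 - 3 * ε + 3)⁻¹ • ((1 - ε) ^ 2 • aPt + (1 - ε) • bPt + c))
      aPt bPt c := by
  have hk' : 1 ≤ k + 1 := by omega
  have hlo := ht.pi_div_four_le hk
  have hhi := ht.lt_pi_div_two hk'
  have hδ : 0 < (t (k + 1) - t k) / 2 := by
    linarith [ht.1 (Set.mem_Ici.2 hk) (Set.mem_Ici.2 hk') (Nat.lt_succ_self k)]
  set μ := (t k + t (k + 1)) / 2 with hμ_def
  set δ := (t (k + 1) - t k) / 2 with hδ_def
  have hv : vSeq t k = unitVec (μ - δ) := by rw [vSeq_eq_unitVec]; congr 1; ring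
  have hv' : vSeq t (k + 1) = unitVec (μ + δ) := by rw [vSeq_eq_unitVec]; congr 1; ring
  have hcC : chordPt μ δ s ∈ C3' t := by
    rw [chordPt, ← hv, ← hv']
    exact segment_vSeq_subset_C3' hk hk' ⟨1 - s, s, by linarith [hs.2], hs.1, by ring, rfl⟩
  have hC : ∀ v ∈ C3' t, ⟪v, unitVec μ⟫ ≤ cos δ := fun v hv =>
    closure_convexHull_subset_setOf_inner_le
      (by rintro _ ⟨j, hj, rfl⟩; exact ht.inner_vSeq_unitVec_le hj hk) hv
  rw [hv, hv', inv_norm_smul_unitVec_add_sub_unitVec_sub μ hδ (by linarith)]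
  have hlo' : π / 4 ≤ μ - δ := by linarith
  have hhi' : μ + δ < π / 2 := by linarith
  exact ⟨chordEps_mem_Ioo hδ hlo' hhi' ⟨hs.1, hs.2.le⟩,
    isCycleWithSupport_cyclePoint (isProj_singleton _ _) (isProj_singleton _ _)
      (isProj_chordPt hδ hlo' hhi' ⟨hs.1, hs.2.le⟩ hcC hC)⟩
end
end

section
/- The image of C₃ under the projection (x,y,z) ↦ (x,y) onto the xy-plane equals C₃'; that is, {(x,y) ∈ ℝ² : ∃ z ∈ ℝ, (x,y,z) ∈ C₃} = C₃'. -/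
noncomputable section
open Real Filter

/-- The closed convex hull of a bounded set is compact, so its image is already closed. -/
theorem ContinuousLinearMap.image_closure_convexHull_of_isBounded
    {E F : Type*} [NormedAddCommGroup E] [NormedSpace ℝ E] [ProperSpace E]
    [AddCommGroup F] [Module ℝ F] [TopologicalSpace F] [T2Space F]
    (f : E →L[ℝ] F) {s : Set E} (hs : Bornology.IsBounded s) :
    f '' closure (convexHull ℝ s) = closure (convexHull ℝ (f '' s)) := by
  have himage : f '' convexHull ℝ s = convexHull ℝ (f '' s) :=
    (f : E →ₗ[ℝ] F).image_convexHull s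
  have hcompact : IsCompact (closure (convexHull ℝ s)) :=
    (isBounded_convexHull.2 hs).isCompact_closure
  apply subset_antisymm
  · rw [← himage]
    exact image_closure_subset_closure_image f.continuous
  · refine closure_minimal ?_ (hcompact.image f.continuous).isClosed
    rw [← himage]
    exact Set.image_mono subset_closure

def projXYL : E3 →L[ℝ] E2 :=
  LinearMap.toContinuousLinearMap
    { toFun := projXY
      map_add' := fun x y => by ext i; fin_cases i <;> simp [projXY]
      map_smul' := fun c x => by ext i; fin_cases i <;> simp [projXY] }

theorem setOf_exists_lift_mem_eq_image_projXY (C : Set E3) :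
    {q : E2 | ∃ z : ℝ, (WithLp.toLp 2 ![q 0, q 1, z] : E3) ∈ C} = projXY '' C := by
  ext q
  constructor
  · rintro ⟨z, hz⟩
    exact ⟨_, hz, by ext i; fin_cases i <;> simp [projXY]⟩
  · rintro ⟨x, hx, rfl⟩
    have hlift : (WithLp.toLp 2 ![projXY x 0, projXY x 1, x 2] : E3) = x := by
      ext i; fin_cases i <;> simp [projXY]
    exact ⟨x 2, hlift ▸ hx⟩

theorem projXY_pSeq (t : ℕ → ℝ) (k : ℕ) : projXY (pSeq t k) = vSeq t k := by
  ext i; fin_cases i <;> simp [projXY, pSeq, vSeq]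

theorem norm_pSeq (t : ℕ → ℝ) (k : ℕ) : ‖pSeq t k‖ = √2 := by
  rw [EuclideanSpace.norm_eq]
  congr 1
  have hsign : ((-1 : ℝ) ^ k) ^ 2 = 1 := by rw [← pow_mul, mul_comm, pow_mul]; norm_num
  simp [pSeq, Fin.sum_univ_three, hsign]
  norm_num

theorem isBounded_range_pSeq (t : ℕ → ℝ) : Bornology.IsBounded (Set.range (pSeq t)) := by
  refine (Metric.isBounded_closedBall (x := (0 : E3)) (r := √2)).subset ?_
  rintro _ ⟨k, rfl⟩
  rw [mem_closedBall_zero_iff, norm_pSeq]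

theorem stmt12_general (t : ℕ → ℝ) :
    {q : E2 | ∃ z : ℝ, (WithLp.toLp 2 ![q 0, q 1, z] : E3) ∈ C3 t} = C3' t := by
  have hbdd : Bornology.IsBounded (pSeq t '' {k | 1 ≤ k}) :=
    (isBounded_range_pSeq t).subset (Set.image_subset_range _ _)
  have himage : projXY '' (pSeq t '' {k | 1 ≤ k}) = vSeq t '' {k | 1 ≤ k} := by
    rw [← Set.image_comp]
    exact Set.image_congr fun k _ => projXY_pSeq t k
  rw [setOf_exists_lift_mem_eq_image_projXY, C3, C3', ← himage]
  exact projXYL.image_closure_convexHull_of_isBounded hbdd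

theorem stmt12 (t : ℕ → ℝ) (ht : Admissible t) :
    {q : E2 | ∃ z : ℝ, (WithLp.toLp 2 ![q 0, q 1, z] : E3) ∈ C3 t} = C3' t :=
  stmt12_general t
end
end

section
/- For every k ≥ 1 and every s ∈ [0,1], letting c = (1−s)v_k + s·v_{k+1} ∈ ℝ², the vertical fiber of C₃ over c is a single point: {z ∈ ℝ : (c₁, c₂, z) ∈ C₃} = {(1−s)(−1)^k + s(−1)^{k+1}}. -/
noncomputable section
open Real Filter

/-!
The fibre contains `z₀ = (1 - s)(-1)^k + s(-1)^(k+1)`, since `(c, z₀)` lies on the segment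
`[p_k, p_{k+1}]`. For uniqueness, rotate the outer normal of the chord `[v_k, v_{k+1}]` of the unit
circle by a small angle `±η` and tilt it vertically so that `p_k` and `p_{k+1}` stay on a common
level set. As the other angles `t_j` are at distance at least `2η` from the arc `[t_k, t_{k+1}]`,
both tilted functionals are maximised over `C₃` on that segment. Their vertical components have
opposite signs, so the two inequalities `⟪n_±, (c, z)⟫ ≤ ⟪n_±, (c, z₀)⟫` force `z = z₀`.
-/

open RealInnerProductSpace

theorem ContinuousLinearMap.le_of_mem_closure_convexHull {E : Type*} [AddCommGroup E]
    [Module ℝ E] [TopologicalSpace E] (f : E →L[ℝ] ℝ) {s : Set E} {m : ℝ}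
    (hs : ∀ x ∈ s, f x ≤ m) {x : E} (hx : x ∈ closure (convexHull ℝ s)) : f x ≤ m :=
  closure_minimal (convexHull_min hs (convex_halfSpace_le f.isLinear m))
    (isClosed_le f.continuous continuous_const) hx

theorem Real.cos_sub_add_mul_sin_mul_sin_le {θ u δ σ : ℝ} (hδ : 0 ≤ δ) (hsinδ : 0 ≤ sin δ)
    (hσ : |σ| ≤ 1) (hsep : |u| + δ ≤ |θ - u|) (hπ : |θ - u| ≤ π) :
    cos (θ - u) + σ * sin u * sin δ ≤ cos u * cos δ := by
  have hσu : σ * sin u ≤ |sin u| := calc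
    σ * sin u ≤ |σ| * |sin u| := (le_abs_self _).trans (abs_mul _ _).le
    _ ≤ |sin u| := mul_le_of_le_one_left (abs_nonneg _) hσ
  calc cos (θ - u) + σ * sin u * sin δ ≤ cos (|u| + δ) + |sin u| * sin δ := by
        gcongr
        rw [← cos_abs (θ - u)]
        exact cos_le_cos_of_nonneg_of_le_pi (by positivity) hπ hsep
    _ = cos u * cos δ := by
        rw [cos_add, cos_abs, abs_sin_eq_sin_abs_of_abs_le_pi (by linarith [abs_nonneg u])]
        ring

theorem inner_toLp_three (a b c x y z : ℝ) :
    ⟪(WithLp.toLp 2 ![a, b, c] : E3), WithLp.toLp 2 ![x, y, z]⟫ = a * x + b * y + c * z := by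
  simp only [PiLp.inner_apply, Fin.sum_univ_three, Matrix.cons_val_zero, Matrix.cons_val_one,
    Matrix.cons_val_two, Matrix.head_cons, Matrix.tail_cons, RCLike.inner_apply, conj_trivial]
  ring

/-- The outer unit normal of the chord `[vSeq t k, vSeq t (k + 1)]` rotated by the angle `u`, with
the vertical component that puts `pSeq t k` and `pSeq t (k + 1)` on the same level set. -/
def edgeNormal (t : ℕ → ℝ) (k : ℕ) (u : ℝ) : E3 :=
  WithLp.toLp 2 ![cos ((t k + t (k + 1)) / 2 + u), sin ((t k + t (k + 1)) / 2 + u),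
    (-1) ^ k * sin u * sin ((t (k + 1) - t k) / 2)]

theorem inner_edgeNormal_pSeq (t : ℕ → ℝ) (k : ℕ) (u : ℝ) (j : ℕ) :
    ⟪edgeNormal t k u, pSeq t j⟫ = cos (t j - (t k + t (k + 1)) / 2 - u)
      + (-1) ^ (k + j) * sin u * sin ((t (k + 1) - t k) / 2) := by
  rw [edgeNormal, pSeq, inner_toLp_three, sub_sub, cos_sub, pow_add]
  ring

theorem inner_edgeNormal_pSeq_self (t : ℕ → ℝ) (k : ℕ) (u : ℝ) :
    ⟪edgeNormal t k u, pSeq t k⟫ = cos u * cos ((t (k + 1) - t k) / 2) := by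
  rw [inner_edgeNormal_pSeq, Even.neg_one_pow ⟨k, rfl⟩,
    show t k - (t k + t (k + 1)) / 2 - u = -((t (k + 1) - t k) / 2 + u) by ring, cos_neg, cos_add]
  ring

theorem inner_edgeNormal_pSeq_succ (t : ℕ → ℝ) (k : ℕ) (u : ℝ) :
    ⟪edgeNormal t k u, pSeq t (k + 1)⟫ = cos u * cos ((t (k + 1) - t k) / 2) := by
  rw [inner_edgeNormal_pSeq, Odd.neg_one_pow ⟨k, by ring⟩,
    show t (k + 1) - (t k + t (k + 1)) / 2 - u = (t (k + 1) - t k) / 2 - u by ring, cos_sub]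
  ring

theorem inner_edgeNormal_segment (t : ℕ → ℝ) (k : ℕ) (u s : ℝ) :
    ⟪edgeNormal t k u, (1 - s) • pSeq t k + s • pSeq t (k + 1)⟫ =
      cos u * cos ((t (k + 1) - t k) / 2) := by
  rw [inner_add_right, real_inner_smul_right, real_inner_smul_right, inner_edgeNormal_pSeq_self,
    inner_edgeNormal_pSeq_succ]
  ring

namespace Admissible

variable {t : ℕ → ℝ}

theorem lt (ht : Admissible t) {i j : ℕ} (hi : 1 ≤ i) (hij : i < j) : t i < t j :=
  ht.1 (Set.mem_Ici.2 hi) (Set.mem_Ici.2 (hi.trans hij.le)) hij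

theorem le (ht : Admissible t) {i j : ℕ} (hi : 1 ≤ i) (hij : i ≤ j) : t i ≤ t j :=
  ht.1.monotoneOn (Set.mem_Ici.2 hi) (Set.mem_Ici.2 (hi.trans hij)) hij

theorem mem_Ico_s13 (ht : Admissible t) {j : ℕ} (hj : 1 ≤ j) : t j ∈ Set.Ico (π / 4) (π / 2) := by
  refine ⟨ht.2.1 ▸ ht.le le_rfl hj, (ht.lt hj j.lt_succ_self).trans_le ?_⟩
  exact ge_of_tendsto ht.2.2 (eventually_atTop.2 ⟨j + 1, fun m hm => ht.le (by omega) hm⟩)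

theorem abs_sub_midpoint_lt (ht : Admissible t) {j k : ℕ} (hj : 1 ≤ j) (hk : 1 ≤ k) :
    |t j - (t k + t (k + 1)) / 2| < π / 4 := by
  obtain ⟨hj₁, hj₂⟩ := ht.mem_Ico_s13 hj
  obtain ⟨hk₁, hk₂⟩ := ht.mem_Ico_s13 hk
  obtain ⟨hk₁', hk₂'⟩ := ht.mem_Ico_s13 (show 1 ≤ k + 1 by omega)
  rw [abs_sub_lt_iff]
  constructor <;> linarith

theorem sin_half_sub_pos (ht : Admissible t) {k : ℕ} (hk : 1 ≤ k) :
    0 < sin ((t (k + 1) - t k) / 2) := by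
  have hlt := ht.lt hk k.lt_succ_self
  have hk₁ := (ht.mem_Ico_s13 hk).1
  have hk₂ := (ht.mem_Ico_s13 (show 1 ≤ k + 1 by omega)).2
  exact sin_pos_of_pos_of_lt_pi (by linarith) (by linarith [pi_pos])

theorem exists_edge_gap (ht : Admissible t) {k : ℕ} (hk : 1 ≤ k) :
    ∃ η > 0, ∀ j, 1 ≤ j → j ≠ k → j ≠ k + 1 →
      (t (k + 1) - t k) / 2 + 2 * η ≤ |t j - (t k + t (k + 1)) / 2| := by
  have hright : 0 < t (k + 2) - t (k + 1) := sub_pos.2 (ht.lt (by omega) (by omega))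
  obtain ⟨g, hg, hgr, hgl⟩ : ∃ g > 0, g ≤ t (k + 2) - t (k + 1) ∧
      (2 ≤ k → g ≤ t k - t (k - 1)) := by
    rcases lt_or_ge k 2 with hk2 | hk2
    · exact ⟨_, hright, le_rfl, fun h => absurd h (by omega)⟩
    · exact ⟨_, lt_min hright (sub_pos.2 (ht.lt (by omega) (by omega))), min_le_left _ _,
        fun _ => min_le_right _ _⟩
  refine ⟨g / 2, by positivity, fun j hj hjk hjk1 => ?_⟩
  rcases lt_or_gt_of_ne hjk with hjk | hjk
  · have := ht.le hj (show j ≤ k - 1 by omega)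
    rw [abs_sub_comm]
    refine le_trans ?_ (le_abs_self _)
    linarith [hgl (by omega)]
  · have := ht.le (by omega) (show k + 2 ≤ j by omega)
    refine le_trans ?_ (le_abs_self _)
    linarith

theorem inner_edgeNormal_pSeq_le (ht : Admissible t) {k : ℕ} (hk : 1 ≤ k) {η u : ℝ}
    (hsep : ∀ j, 1 ≤ j → j ≠ k → j ≠ k + 1 →
      (t (k + 1) - t k) / 2 + 2 * η ≤ |t j - (t k + t (k + 1)) / 2|)
    (hu : |u| ≤ η) {j : ℕ} (hj : 1 ≤ j) :
    ⟪edgeNormal t k u, pSeq t j⟫ ≤ cos u * cos ((t (k + 1) - t k) / 2) := by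
  by_cases hjk : j = k
  · exact hjk ▸ (inner_edgeNormal_pSeq_self t k u).le
  by_cases hjk1 : j = k + 1
  · exact hjk1 ▸ (inner_edgeNormal_pSeq_succ t k u).le
  have hsepj := hsep j hj hjk hjk1
  have hmid := ht.abs_sub_midpoint_lt hj hk
  have hδ : 0 ≤ (t (k + 1) - t k) / 2 := by linarith [ht.lt hk k.lt_succ_self]
  have hσ : |((-1 : ℝ) ^ (k + j))| ≤ 1 := by simp
  rw [inner_edgeNormal_pSeq]
  refine cos_sub_add_mul_sin_mul_sin_le hδ (ht.sin_half_sub_pos hk).le hσ ?_ ?_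
  · linarith [abs_sub_abs_le_abs_sub (t j - (t k + t (k + 1)) / 2) u]
  · linarith [abs_sub (t j - (t k + t (k + 1)) / 2) u, pi_pos, abs_nonneg u]

theorem exists_edgeNormal_support (ht : Admissible t) {k : ℕ} (hk : 1 ≤ k) :
    ∃ η, 0 < η ∧ η < π ∧ ∀ u, |u| ≤ η → ∀ x ∈ C3 t,
      ⟪edgeNormal t k u, x⟫ ≤ cos u * cos ((t (k + 1) - t k) / 2) := by
  obtain ⟨η, hη, hsep⟩ := ht.exists_edge_gap hk
  refine ⟨η, hη, ?_, fun u hu x hx => ?_⟩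
  · have := hsep (k + 2) (by omega) (by omega) (by omega)
    linarith [ht.abs_sub_midpoint_lt (show 1 ≤ k + 2 by omega) hk, ht.lt hk k.lt_succ_self]
  · refine (innerSL ℝ (edgeNormal t k u)).le_of_mem_closure_convexHull ?_ hx
    rintro _ ⟨j, hj, rfl⟩
    exact ht.inner_edgeNormal_pSeq_le hk hsep hu hj

end Admissible

theorem segment_mem_C3 {t : ℕ → ℝ} {k : ℕ} (hk : 1 ≤ k) {s : ℝ} (hs : s ∈ Set.Icc (0 : ℝ) 1) :
    (1 - s) • pSeq t k + s • pSeq t (k + 1) ∈ C3 t :=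
  subset_closure <| convex_convexHull ℝ _
    (subset_convexHull ℝ _ (Set.mem_image_of_mem _ hk))
    (subset_convexHull ℝ _ (Set.mem_image_of_mem _ (show 1 ≤ k + 1 by omega)))
    (by linarith [hs.2]) hs.1 (by ring)

theorem stmt13 (t : ℕ → ℝ) (ht : Admissible t) (k : ℕ) (hk : 1 ≤ k)
    (s : ℝ) (hs : s ∈ Set.Icc (0 : ℝ) 1) :
    let c : E2 := (1 - s) • vSeq t k + s • vSeq t (k + 1)
    {z : ℝ | (WithLp.toLp 2 ![c 0, c 1, z] : E3) ∈ C3 t} =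
      {(1 - s) * (-1 : ℝ) ^ k + s * (-1 : ℝ) ^ (k + 1)} := by
  intro c
  set z₀ := (1 - s) * (-1 : ℝ) ^ k + s * (-1 : ℝ) ^ (k + 1)
  have hz₀ : (WithLp.toLp 2 ![c 0, c 1, z₀] : E3) = (1 - s) • pSeq t k + s • pSeq t (k + 1) := by
    ext i
    fin_cases i <;> simp [c, z₀, vSeq, pSeq]
  ext z
  constructor
  swap
  · rintro rfl
    rw [Set.mem_ofPred_eq, hz₀]
    exact segment_mem_C3 hk hs
  intro hz
  obtain ⟨η, hη, hηπ, hsupp⟩ := ht.exists_edgeNormal_support hk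
  have hle : ∀ u, |u| ≤ η → (-1) ^ k * sin u * sin ((t (k + 1) - t k) / 2) * (z - z₀) ≤ 0 := by
    intro u hu
    have hx := hsupp u hu _ hz
    have hy := inner_edgeNormal_segment t k u s
    rw [← hz₀] at hy
    simp only [edgeNormal, inner_toLp_three] at hx hy
    linarith
  have hγ : (-1) ^ k * sin η * sin ((t (k + 1) - t k) / 2) ≠ 0 :=
    mul_ne_zero (mul_ne_zero (by simp) (sin_pos_of_pos_of_lt_pi hη hηπ).ne')
      (ht.sin_half_sub_pos hk).ne'
  have hzero := le_antisymm (hle η (abs_of_pos hη).le)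
    (by simpa [sin_neg] using hle (-η) (by rw [abs_neg, abs_of_pos hη]))
  exact sub_eq_zero.1 ((mul_eq_zero.1 hzero).resolve_left hγ)
end
end

section
/- Consider the sets C₁ = co{(−2,2,1), (−2,2,−1)}, C₂ = co{(2,2,1), (2,2,−1)} and the solid cylinder D = {(x,y,z) ∈ ℝ³ : x² + y² ≤ 1, |z| ≤ 1}, fix ε ∈ (0,1], and let (u_n)_{n≥0} be the ε-under-relaxed cyclic projection sequence starting from u₀ = (x₀, y₀, z₀) with |z₀| ≤ 1: u_{3k+1} = u_{3k} + ε(Π_{C₁}(u_{3k}) − u_{3k}), u_{3k+2} = u_{3k+1} + ε(Π_{C₂}(u_{3k+1}) − u_{3k+1}), u_{3k+3} = u_{3k+2} + ε(Π_D(u_{3k+2}) − u_{3k+2}). Then every iterate u_n has third coordinate equal to z₀. -/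
noncomputable section
open Real Filter

/-! With any of its points, each of C₁, C₂ and D contains every point above or below it at
height in `[-1, 1]`. The variational inequality tested against that point forces the projection
of a point of height in `[-1, 1]` to have the same height, and so do the relaxed steps; by
induction the height stays `z₀`. -/

open EuclideanSpace

theorem IsProj.apply_eq_of_add_single_mem {ι : Type} [Fintype ι] [DecidableEq ι]
    {C : Set (EuclideanSpace ℝ ι)} {u w : EuclideanSpace ℝ ι} (h : IsProj C u w) (i : ι)
    (hv : w + single i (u i - w i) ∈ C) : w i = u i := by
  have key := h.2 _ hv
  rw [add_sub_cancel_left, inner_single_left, PiLp.sub_apply] at key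
  simp only [conj_trivial] at key
  nlinarith

theorem add_single_two_mem_vertical_segment (c d : ℝ) {x : E3} {s : ℝ} (hs : |s| ≤ 1)
    (hx : x ∈ convexHull ℝ {WithLp.toLp 2 ![c, d, 1], WithLp.toLp 2 ![c, d, -1]}) :
    x + single 2 (s - x 2) ∈ convexHull ℝ {WithLp.toLp 2 ![c, d, 1], WithLp.toLp 2 ![c, d, -1]} := by
  rw [convexHull_pair] at hx ⊢
  obtain ⟨a, b, -, -, hab, rfl⟩ := hx
  obtain ⟨hs₁, hs₂⟩ := abs_le.1 hs
  refine ⟨(1 + s) / 2, (1 - s) / 2, by linarith, by linarith, by ring, ?_⟩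
  ext i
  fin_cases i <;> simp
  · linear_combination (-c) * hab
  · linear_combination (-d) * hab
  · ring

theorem add_single_two_mem_Dcyl {x : E3} {s : ℝ} (hs : |s| ≤ 1) (hx : x ∈ Dcyl) :
    x + single 2 (s - x 2) ∈ Dcyl := by
  simpa [Dcyl] using And.intro hx.1 hs

theorem IsProj.apply_two_eq_of_vertical_segment {c d : ℝ} {u w : E3} (hu : |u 2| ≤ 1)
    (h : IsProj (convexHull ℝ {WithLp.toLp 2 ![c, d, 1], WithLp.toLp 2 ![c, d, -1]}) u w) :
    w 2 = u 2 :=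
  h.apply_eq_of_add_single_mem 2 (add_single_two_mem_vertical_segment c d hu h.1)

theorem IsProj.apply_two_eq_of_Dcyl {u w : E3} (hu : |u 2| ≤ 1) (h : IsProj Dcyl u w) :
    w 2 = u 2 :=
  h.apply_eq_of_add_single_mem 2 (add_single_two_mem_Dcyl hu h.1)

theorem relaxed_step_apply_eq {ι : Type} {x w : EuclideanSpace ℝ ι} (ε : ℝ) {i : ι}
    (h : w i = x i) : (x + ε • (w - x)) i = x i := by
  simp [h]

theorem stmt17_general (ε : ℝ) (u : ℕ → E3) (hz : |u 0 2| ≤ 1)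
    (h1 : ∀ k : ℕ, ∃ w, IsProj C1 (u (3 * k)) w ∧
        u (3 * k + 1) = u (3 * k) + ε • (w - u (3 * k)))
    (h2 : ∀ k : ℕ, ∃ w, IsProj C2 (u (3 * k + 1)) w ∧
        u (3 * k + 2) = u (3 * k + 1) + ε • (w - u (3 * k + 1)))
    (h3 : ∀ k : ℕ, ∃ w, IsProj Dcyl (u (3 * k + 2)) w ∧
        u (3 * k + 3) = u (3 * k + 2) + ε • (w - u (3 * k + 2))) :
    ∀ n : ℕ, u n 2 = u 0 2 := by
  have step : ∀ n, |u n 2| ≤ 1 → u (n + 1) 2 = u n 2 := by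
    intro n hn
    obtain ⟨k, rfl | rfl | rfl⟩ : ∃ k, n = 3 * k ∨ n = 3 * k + 1 ∨ n = 3 * k + 2 :=
      ⟨n / 3, by omega⟩
    · obtain ⟨w, hw, hstep⟩ := h1 k
      rw [hstep]
      exact relaxed_step_apply_eq ε (hw.apply_two_eq_of_vertical_segment hn)
    · obtain ⟨w, hw, hstep⟩ := h2 k
      rw [hstep]
      exact relaxed_step_apply_eq ε (hw.apply_two_eq_of_vertical_segment hn)
    · obtain ⟨w, hw, hstep⟩ := h3 k
      rw [hstep]
      exact relaxed_step_apply_eq ε (hw.apply_two_eq_of_Dcyl hn)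
  intro n
  induction n with
  | zero => rfl
  | succ n ih => rw [step n (ih ▸ hz), ih]

theorem stmt17 (ε : ℝ) (hε : ε ∈ Set.Ioc (0 : ℝ) 1) (u : ℕ → E3) (hz : |u 0 2| ≤ 1)
    (h1 : ∀ k : ℕ, ∃ w, IsProj C1 (u (3 * k)) w ∧
        u (3 * k + 1) = u (3 * k) + ε • (w - u (3 * k)))
    (h2 : ∀ k : ℕ, ∃ w, IsProj C2 (u (3 * k + 1)) w ∧
        u (3 * k + 2) = u (3 * k + 1) + ε • (w - u (3 * k + 1)))
    (h3 : ∀ k : ℕ, ∃ w, IsProj Dcyl (u (3 * k + 2)) w ∧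
        u (3 * k + 3) = u (3 * k + 2) + ε • (w - u (3 * k + 2))) :
    ∀ n : ℕ, u n 2 = u 0 2 :=
  stmt17_general ε u hz h1 h2 h3
end
end

section
/- Let C₁, …, C_m be nonempty compact convex subsets of a real Hilbert space, let (ε_j) be a sequence in (0,1] with ε_j → 0, and for each j let (u₁^j, …, u_m^j) be an ε_j-cycle for (C₁, …, C_m), i.e. u_i^j = u_{i−1}^j + ε_j(Π_{C_i}(u_{i−1}^j) − u_{i−1}^j) for i = 1, …, m, with the convention u₀^j = u_m^j. If (u₁^j, …, u_m^j) converges to (ū₁, …, ū_m) as j → ∞, then ū₁ = ū₂ = ⋯ = ū_m. -/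
noncomputable section
open Real Filter

open Topology

/-! The `i`-th step of an `ε_j`-cycle moves `u_{i-1}` by `ε_j • (w - u_{i-1})` with `w` in the
bounded set `C_i`. Since the `u_{i-1}^j` converge, consecutive components differ by `O(ε_j) → 0`
and so have the same limit; going once around the cycle makes all limits equal. -/

theorem Filter.Tendsto.smul_sub_of_mem_isBounded {α E : Type*} [SeminormedAddCommGroup E]
    [NormedSpace ℝ E] {l : Filter α} {ε : α → ℝ} {a w : α → E} {a₀ : E} {S : Set E}
    (hε : Tendsto ε l (𝓝 0)) (ha : Tendsto a l (𝓝 a₀)) (hS : Bornology.IsBounded S)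
    (hw : ∀ j, w j ∈ S) : Tendsto (fun j => ε j • (w j - a j)) l (𝓝 0) := by
  obtain ⟨R, hR⟩ := hS.exists_norm_le
  obtain ⟨M, hM⟩ := ha.norm.isBoundedUnder_le
  refine hε.zero_smul_isBoundedUnder_le ⟨R + M, eventually_map.mpr ?_⟩
  filter_upwards [eventually_map.mp hM] with j hj
  exact (norm_sub_le _ _).trans (add_le_add (hR _ (hw j)) hj)

theorem Fin.apply_eq_apply_of_forall_apply_eq_apply_sub_one {m : ℕ} [NeZero m] {β : Type*}
    {f : Fin m → β} (h : ∀ i, f i = f (i - 1)) (i i' : Fin m) : f i = f i' := by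
  open Fin.CommRing in
  have shift : ∀ (k : ℕ) (i : Fin m), f i = f (i - k) := by
    intro k
    induction k with
    | zero => simp
    | succ k ih =>
      intro i
      rw [ih i, h (i - k)]
      push_cast
      ring_nf
  simpa only [Fin.cast_val_eq_self, sub_sub_cancel] using shift (i - i').val i

theorem stmt18_general {H : Type} [NormedAddCommGroup H] [InnerProductSpace ℝ H]
    (m : ℕ) [NeZero m] (C : Fin m → Set H)
    (hC : ∀ i, (C i).Nonempty ∧ IsCompact (C i) ∧ Convex ℝ (C i))
    (ε : ℕ → ℝ) (hε0 : Tendsto ε atTop (nhds 0))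
    (u : ℕ → Fin m → H)
    (hcyc : ∀ j : ℕ, ∀ i : Fin m, ∃ w, IsProj (C i) (u j (i - 1)) w ∧
        u j i = u j (i - 1) + ε j • (w - u j (i - 1)))
    (ubar : Fin m → H) (hconv : Tendsto u atTop (nhds ubar)) :
    ∀ i i' : Fin m, ubar i = ubar i' := by
  choose w hw hu using hcyc
  refine Fin.apply_eq_apply_of_forall_apply_eq_apply_sub_one fun i => ?_
  have hlim := tendsto_pi_nhds.mp hconv
  have hstep : Tendsto (fun j => u j i - u j (i - 1)) atTop (𝓝 0) := by
    convert hε0.smul_sub_of_mem_isBounded (hlim (i - 1)) (hC i).2.1.isBounded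
      fun j => (hw j i).1 using 2 with j
    rw [hu j i, add_sub_cancel_left]
  exact sub_eq_zero.mp (tendsto_nhds_unique ((hlim i).sub (hlim (i - 1))) hstep)

theorem stmt18 {H : Type} [NormedAddCommGroup H] [InnerProductSpace ℝ H] [CompleteSpace H]
    (m : ℕ) [NeZero m] (C : Fin m → Set H)
    (hC : ∀ i, (C i).Nonempty ∧ IsCompact (C i) ∧ Convex ℝ (C i))
    (ε : ℕ → ℝ) (hε : ∀ j, ε j ∈ Set.Ioc (0 : ℝ) 1) (hε0 : Tendsto ε atTop (nhds 0))
    (u : ℕ → Fin m → H)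
    (hcyc : ∀ j : ℕ, ∀ i : Fin m, ∃ w, IsProj (C i) (u j (i - 1)) w ∧
        u j i = u j (i - 1) + ε j • (w - u j (i - 1)))
    (ubar : Fin m → H) (hconv : Tendsto u atTop (nhds ubar)) :
    ∀ i i' : Fin m, ubar i = ubar i' :=
  stmt18_general m C hC ε hε0 u hcyc ubar hconv
end
end
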